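/- arXiv:1103.4992 — 8 statements merged into one kernel-verified Lean document; each statement's English description precedes it below -/
import Mathlib

section
/- Let μ̂, ω̂, σ̂, γ̂, β̂₁, Î_r, k₁, k₂, k₃, k₄, k₅ be real numbers and let Â₀ be the real 4×4 matrix with rows (-(μ̂+k₁+(β̂₁+k₅)Î_r), -k₂, -k₃, ω̂-k₄), (0, -(μ̂+σ̂), 0, 0), (0, σ̂, -(μ̂+γ̂), 0), (k₁+k₅Î_r, k₂, γ̂+k₃, -(μ̂+ω̂-k₄)). Then for every complex number s, det(s·Id - Â₀) = d̂(s) + (k₁ + k₅Î_r)·n̂(s), where d̂(s) = (s+μ̂+k₁+(β̂₁+k₅)Î_r)(s+μ̂+σ̂)(s+μ̂+γ̂)(s+μ̂+ω̂-k₄) and n̂(s) = (k₄-ω̂)(s+μ̂+σ̂)(s+μ̂+γ̂). -/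
set_option maxHeartbeats 1600000


/-- The characteristic determinant of the closed-loop observer matrix `Â₀`
satisfies `det(s·Id - Â₀) = d̂(s) + (k₁ + k₅Î_r)·n̂(s)` where
`d̂(s) = (s+μ̂+k₁+(β̂₁+k₅)Î_r)(s+μ̂+σ̂)(s+μ̂+γ̂)(s+μ̂+ω̂-k₄)` and
`n̂(s) = (k₄-ω̂)(s+μ̂+σ̂)(s+μ̂+γ̂)`. -/
theorem seir_observer_A0_char_det
    (μh ωh σh γh β₁h Irh k₁ k₂ k₃ k₄ k₅ : ℝ)
    (Ah₀ : Matrix (Fin 4) (Fin 4) ℝ)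
    (hAh₀ : Ah₀ = !![-(μh + k₁ + (β₁h + k₅) * Irh), -k₂, -k₃, ωh - k₄;
                     0, -(μh + σh), 0, 0;
                     0, σh, -(μh + γh), 0;
                     k₁ + k₅ * Irh, k₂, γh + k₃, -(μh + ωh - k₄)]) :
    ∀ s : ℂ,
      Matrix.det (s • (1 : Matrix (Fin 4) (Fin 4) ℂ) - Ah₀.map (Complex.ofReal)) =
        (s + μh + k₁ + (β₁h + k₅) * Irh) * (s + μh + σh) * (s + μh + γh)
            * (s + μh + ωh - k₄)
          + (k₁ + k₅ * Irh) * ((k₄ - ωh) * (s + μh + σh) * (s + μh + γh)) := by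
  intro s
  subst hAh₀
  have h : s • (1 : Matrix (Fin 4) (Fin 4) ℂ) -
      (!![-(μh + k₁ + (β₁h + k₅) * Irh), -k₂, -k₃, ωh - k₄;
          0, -(μh + σh), 0, 0;
          0, σh, -(μh + γh), 0;
          k₁ + k₅ * Irh, k₂, γh + k₃, -(μh + ωh - k₄)] :
        Matrix (Fin 4) (Fin 4) ℝ).map (Complex.ofReal) =
      !![s + (μh + k₁ + (β₁h + k₅) * Irh), (k₂:ℂ), (k₃:ℂ), -((ωh:ℂ) - k₄);
         0, s + (μh + σh), 0, 0;
         0, -(σh:ℂ), s + (μh + γh), 0;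
         -((k₁:ℂ) + k₅ * Irh), -(k₂:ℂ), -((γh:ℂ) + k₃), s + (μh + ωh - k₄)] := by
    ext i j
    fin_cases i <;> fin_cases j <;>
      simp [Matrix.one_apply] <;> ring
  rw [h]
  rw [Matrix.det_succ_row_zero]
  simp [Fin.sum_univ_succ, Matrix.det_fin_three, Matrix.submatrix_apply, Fin.succAbove,
    Fin.castSucc, Fin.castAdd, Fin.castLE]
  ring
end

section
/- Let p and q be polynomials with complex coefficients such that the degree of q is strictly less than the degree of p, every root of p has negative real part, and sup over real ω of |q(iω)|/|p(iω)| is strictly less than 1. Then every root of p + q has negative real part. -/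
open Filter Polynomial Complex Bornology Topology

/-- Auxiliary: for complex polynomials with `deg q < deg p`, the rational function `q/p`
tends to `0` at infinity. -/
lemma small_gain_aux_tendsto (p q : Polynomial ℂ) (hdeg : q.degree < p.degree) :
    Tendsto (fun z : ℂ => q.eval z / p.eval z) (cobounded ℂ) (𝓝 0) := by
  have hp0 : p ≠ 0 := by
    rintro rfl
    simp only [degree_zero] at hdeg
    exact not_lt_bot hdeg
  set n := p.natDegree with hn
  have hqn : q.natDegree ≤ n := natDegree_le_natDegree hdeg.le
  set F : ℂ → ℂ := fun w => (reflect n q).eval w / (reflect n p).eval w with hF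
  have hrev : Polynomial.revAt n 0 = n := by
    rw [Polynomial.revAt_le (Nat.zero_le n)]; omega
  have hp00 : (reflect n p).eval 0 ≠ 0 := by
    rw [← Polynomial.coeff_zero_eq_eval_zero, Polynomial.coeff_reflect, hrev,
      Polynomial.coeff_natDegree]
    exact leadingCoeff_ne_zero.mpr hp0
  have hq00 : (reflect n q).eval 0 = 0 := by
    rw [← Polynomial.coeff_zero_eq_eval_zero, Polynomial.coeff_reflect, hrev]
    exact coeff_eq_zero_of_degree_lt (by rwa [degree_eq_natDegree hp0] at hdeg)
  have hFc : ContinuousAt F 0 :=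
    ((reflect n q).continuous.continuousAt).div ((reflect n p).continuous.continuousAt) hp00
  have hF0 : F 0 = 0 := by simp [hF, hq00]
  have h1 : Tendsto (fun z : ℂ => F z⁻¹) (cobounded ℂ) (𝓝 0) := by
    have := hFc.tendsto
    rw [hF0] at this
    exact this.comp Filter.tendsto_inv₀_cobounded
  refine h1.congr' ?_
  filter_upwards [(eventually_ne_cobounded (0 : ℂ))] with z hz
  have : Invertible z := invertibleOfNonzero hz
  have hinv : (⅟z : ℂ) = z⁻¹ := invOf_eq_inv z
  have hq' : (reflect n q).eval z⁻¹ * z ^ n = q.eval z := by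
    have := Polynomial.eval₂_reflect_mul_pow (RingHom.id ℂ) z n q hqn
    simpa [Polynomial.eval₂_id, hinv] using this
  have hp' : (reflect n p).eval z⁻¹ * z ^ n = p.eval z := by
    have := Polynomial.eval₂_reflect_mul_pow (RingHom.id ℂ) z n p le_rfl
    simpa [Polynomial.eval₂_id, hinv] using this
  rw [hF, ← hq', ← hp', mul_div_mul_right _ _ (pow_ne_zero n hz)]

/-- small-gain criterion: if `p` is Hurwitz, `deg q < deg p` and
`sup_{ω ∈ ℝ} |q(iω)|/|p(iω)| < 1`, then `p + q` is Hurwitz. -/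
theorem small_gain_hurwitz
    (p q : Polynomial ℂ)
    (hdeg : q.degree < p.degree)
    (hp : ∀ z : ℂ, p.IsRoot z → z.re < 0)
    (hsup : (⨆ ω : ℝ, ‖q.eval (Complex.I * ω)‖ /
        ‖p.eval (Complex.I * ω)‖) < 1) :
    ∀ z : ℂ, (p + q).IsRoot z → z.re < 0 := by
  intro z hz
  by_contra hre
  push_neg at hre
  set f : ℂ → ℂ := fun w => q.eval w / p.eval w with hf
  -- p does not vanish on the closed right half-plane
  have hpne : ∀ w : ℂ, 0 ≤ w.re → p.eval w ≠ 0 := by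
    intro w hw h
    exact absurd (hp w h) (not_lt.2 hw)
  -- q/p → 0 at infinity
  have htends : Tendsto f (cobounded ℂ) (𝓝 0) := small_gain_aux_tendsto p q hdeg
  -- differentiability on the closed right half-plane
  have hd : DiffContOnCl ℂ f {w : ℂ | 0 < w.re} := by
    have hdiff : ∀ w : ℂ, 0 ≤ w.re → DifferentiableAt ℂ f w := fun w hw =>
      (q.differentiable.differentiableAt).div (p.differentiable.differentiableAt) (hpne w hw)
    constructor
    · exact fun w hw => ((hdiff w (le_of_lt hw)).differentiableWithinAt)
    · rw [Complex.closure_setOf_lt_re]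
      exact fun w hw => ((hdiff w hw).continuousAt).continuousWithinAt
  -- exponential growth bound (trivially: f is bounded at infinity)
  have hexp : ∃ c < (2 : ℝ), ∃ B, f =O[cobounded ℂ ⊓ Filter.principal {z : ℂ | 0 < z.re}]
      fun z => Real.exp (B * ‖z‖ ^ c) := by
    refine ⟨1, one_lt_two, 0, ?_⟩
    have h1 : f =O[cobounded ℂ] (fun _ : ℂ => (1 : ℝ)) := htends.isBigO_one ℝ
    have h2 : f =O[cobounded ℂ ⊓ Filter.principal {z : ℂ | 0 < z.re}] (fun _ : ℂ => (1 : ℝ)) :=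
      h1.mono inf_le_left
    simpa using h2
  -- the boundary function and its supremum
  set g : ℝ → ℝ := fun ω => ‖q.eval (Complex.I * ω)‖ /
      ‖p.eval (Complex.I * ω)‖ with hg
  have hgf : ∀ ω : ℝ, g ω = ‖f (Complex.I * ω)‖ := by
    intro ω
    simp [hg, hf, map_div₀]
  have hmul : Continuous fun ω : ℝ => Complex.I * (ω : ℂ) :=
    continuous_const.mul Complex.continuous_ofReal
  have hgcont : Continuous g := by
    refine Continuous.div ?_ ?_ ?_
    · exact continuous_norm.comp (q.continuous.comp hmul)
    · exact continuous_norm.comp (p.continuous.comp hmul)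
    · intro ω
      exact norm_ne_zero_iff.mpr (hpne (Complex.I * ω) (by simp))
  have hgten : Tendsto g (cocompact ℝ) (𝓝 0) := by
    have hIω : Tendsto (fun ω : ℝ => Complex.I * ω) (cocompact ℝ) (cobounded ℂ) := by
      rw [← tendsto_norm_atTop_iff_cobounded]
      have : (fun ω : ℝ => ‖Complex.I * (ω : ℂ)‖) = fun ω : ℝ => ‖ω‖ := by
        funext ω; simp
      rw [this]
      exact tendsto_norm_cocompact_atTop
    have := (htends.comp hIω).norm
    simp only [norm_zero] at this
    refine this.congr fun ω => (hgf ω).symm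
  -- boundedness of g
  have hbdd : BddAbove (Set.range g) := by
    have hev : ∀ᶠ ω in cocompact ℝ, g ω < 1 := hgten.eventually (eventually_lt_nhds zero_lt_one)
    rcases mem_cocompact.mp hev with ⟨K, hK, hKsub⟩
    rcases (hK.image hgcont).bddAbove with ⟨M, hM⟩
    refine ⟨max M 1, ?_⟩
    rintro x ⟨ω, rfl⟩
    by_cases hω : ω ∈ K
    · exact le_max_of_le_left (hM (Set.mem_image_of_mem g hω))
    · exact le_max_of_le_right (le_of_lt (hKsub hω))
  set C : ℝ := ⨆ ω : ℝ, g ω with hC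
  have him : ∀ x : ℝ, ‖f ((x : ℂ) * Complex.I)‖ ≤ C := by
    intro x
    have : ((x : ℂ) * Complex.I) = Complex.I * x := mul_comm _ _
    rw [this, ← hgf x]
    exact le_ciSup hbdd x
  have hreal : Tendsto (fun x : ℝ => f x) atTop (𝓝 0) := by
    refine htends.comp ?_
    rw [← tendsto_norm_atTop_iff_cobounded]
    have : (fun x : ℝ => ‖(x : ℂ)‖) = fun x : ℝ => |x| := by funext x; simp
    rw [this]
    exact tendsto_abs_atTop_atTop
  have hPL : ‖f z‖ ≤ C :=
    PhragmenLindelof.right_half_plane_of_tendsto_zero_on_real hd hexp hreal him hre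
  -- at the root z, |f z| = 1
  have hpz : p.eval z ≠ 0 := hpne z hre
  have hqz : q.eval z = -(p.eval z) := by
    have : p.eval z + q.eval z = 0 := by simpa [Polynomial.IsRoot, Polynomial.eval_add] using hz
    linear_combination this
  have hfz : ‖f z‖ = 1 := by
    rw [hf]
    simp only [hqz, norm_div, norm_neg]
    exact div_self (norm_ne_zero_iff.mpr hpz)
  rw [hfz] at hPL
  exact absurd (lt_of_le_of_lt hPL hsup) (lt_irrefl 1)
end

section
/- Let A₀ be a real n×n matrix, and suppose there exist K ≥ 1 and ρ > 0 such that ‖exp(tA₀)‖ ≤ K e^{-ρt} for all t ≥ 0 (operator norm). Let Δ : [0,∞) → (n×n real matrices) be continuous, and suppose there exist constants α₀ ≥ 0 and α₁ ≥ 0 with Kα₀ < ρ such that ∫₀ᵗ ‖Δ(τ)‖ dτ ≤ α₀ t + α₁ for all t ≥ 0. Then every differentiable function x : [0,∞) → ℝⁿ satisfying x'(t) = (A₀ + Δ(t))x(t) for all t ≥ 0 obeys ‖x(t)‖ ≤ K e^{Kα₁} ‖x(0)‖ e^{-(ρ - Kα₀)t} for all t ≥ 0; in particular the unforced system is globally exponentially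 stable. -/
open scoped Topology

/-- Gronwall inequality in integral form. -/
lemma gronwall_integral_aux (u g : ℝ → ℝ) (C : ℝ)
    (hu : Continuous u) (hg : Continuous g) (hg0 : ∀ s, 0 ≤ g s)
    (h : ∀ t, 0 ≤ t → u t ≤ C + ∫ s in (0:ℝ)..t, g s * u s) :
    ∀ t, 0 ≤ t → u t ≤ C * Real.exp (∫ s in (0:ℝ)..t, g s) := by
  intro t ht
  have hfc : Continuous fun s => g s * u s := hg.mul hu
  set v : ℝ → ℝ := fun s => C + ∫ τ in (0:ℝ)..s, g τ * u τ with hv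
  set G : ℝ → ℝ := fun s => ∫ τ in (0:ℝ)..s, g τ with hG
  have hvd : ∀ s : ℝ, HasDerivAt v (g s * u s) s := by
    intro s
    exact (intervalIntegral.integral_hasDerivAt_right (hfc.intervalIntegrable 0 s)
      (hfc.stronglyMeasurableAtFilter _ _) hfc.continuousAt).const_add C
  have hGd : ∀ s : ℝ, HasDerivAt G (g s) s := fun s =>
    intervalIntegral.integral_hasDerivAt_right (hg.intervalIntegrable 0 s)
      (hg.stronglyMeasurableAtFilter _ _) hg.continuousAt
  set w : ℝ → ℝ := fun s => v s * Real.exp (-G s) with hw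
  have hwd : ∀ s : ℝ, HasDerivAt w
      (g s * u s * Real.exp (-G s) + v s * (Real.exp (-G s) * (-g s))) s := by
    intro s
    have h1 : HasDerivAt (fun s => Real.exp (-G s)) (Real.exp (-G s) * (-g s)) s :=
      ((hGd s).neg).exp
    exact (hvd s).mul h1
  have key : w t ≤ w 0 := by
    have mono : AntitoneOn w (Set.Icc 0 t) := by
      apply antitoneOn_of_deriv_nonpos (convex_Icc 0 t)
      · exact (Continuous.continuousOn (by
          exact continuous_iff_continuousAt.2 fun s => (hwd s).continuousAt))
      · intro s _
        exact (hwd s).differentiableAt.differentiableWithinAt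
      · intro s hs
        rw [interior_Icc] at hs
        have hs0 : (0:ℝ) ≤ s := hs.1.le
        rw [(hwd s).deriv]
        have hus : u s ≤ v s := h s hs0
        have h2 : g s * u s ≤ g s * v s := mul_le_mul_of_nonneg_left hus (hg0 s)
        nlinarith [Real.exp_pos (-G s)]
    exact mono (Set.left_mem_Icc.2 ht) (Set.right_mem_Icc.2 ht) ht
  have hw0 : w 0 = C := by
    simp [hw, hv, hG]
  rw [hw0] at key
  have hvt : v t ≤ C * Real.exp (G t) := by
    have hp : (0:ℝ) < Real.exp (-G t) := Real.exp_pos _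
    have := mul_le_mul_of_nonneg_right key (Real.exp_pos (G t)).le
    rwa [mul_assoc, ← Real.exp_add, neg_add_cancel, Real.exp_zero, mul_one] at this
  exact (h t ht).trans hvt

noncomputable def matCLMequiv (n : ℕ) :
    Matrix (Fin n) (Fin n) ℝ ≃ₗ[ℝ]
      (EuclideanSpace ℝ (Fin n) →L[ℝ] EuclideanSpace ℝ (Fin n)) where
  toFun := Matrix.toEuclideanCLM (𝕜 := ℝ)
  map_add' a b := map_add _ a b
  map_smul' c a := map_smul _ c a
  invFun := (Matrix.toEuclideanCLM (𝕜 := ℝ)).symm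
  left_inv a := (Matrix.toEuclideanCLM (𝕜 := ℝ)).symm_apply_apply a
  right_inv a := (Matrix.toEuclideanCLM (𝕜 := ℝ)).apply_symm_apply a

lemma continuous_matCLM (n : ℕ) :
    Continuous (Matrix.toEuclideanCLM (𝕜 := ℝ) (n := Fin n)) :=
  (matCLMequiv n).toContinuousLinearEquiv.continuous

lemma toEuclideanCLM_exp (n : ℕ) (M : Matrix (Fin n) (Fin n) ℝ) :
    Matrix.toEuclideanCLM (𝕜 := ℝ) (NormedSpace.exp M) =
      NormedSpace.exp (Matrix.toEuclideanCLM (𝕜 := ℝ) M) := by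
  have hfun : ∀ A : Matrix (Fin n) (Fin n) ℝ,
      Matrix.toEuclideanCLM (𝕜 := ℝ) A = (matCLMequiv n).toContinuousLinearEquiv A :=
    fun _ => rfl
  rw [NormedSpace.exp_eq_tsum ℝ, NormedSpace.exp_eq_tsum ℝ, hfun,
    ContinuousLinearEquiv.map_tsum]
  congr 1
  ext k
  rw [← hfun, map_smul, map_pow]

set_option synthInstance.maxHeartbeats 1000000 in
set_option maxHeartbeats 4000000 in
/-- Gronwall robustness, integral-averaged bound: if `‖exp(tA₀)‖ ≤ K e^{-ρt}`
and the continuous perturbation `Δ` satisfies `∫₀ᵗ ‖Δ(τ)‖ dτ ≤ α₀ t + α₁` with `Kα₀ < ρ`,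
then every solution of `x' = (A₀ + Δ(t))x` obeys
`‖x(t)‖ ≤ K e^{Kα₁} ‖x(0)‖ e^{-(ρ-Kα₀)t}` for `t ≥ 0`. -/
theorem perturbed_linear_system_exponential_decay_integral_bound
    (n : ℕ) (A₀ : Matrix (Fin n) (Fin n) ℝ)
    (K ρ α₀ α₁ : ℝ) (hK : 1 ≤ K) (hρ : 0 < ρ) (hα₀ : 0 ≤ α₀) (hα₁ : 0 ≤ α₁)
    (hexp : ∀ t : ℝ, 0 ≤ t →
      ‖(Matrix.toEuclideanCLM (𝕜 := ℝ) (NormedSpace.exp (t • A₀)))‖ ≤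
        K * Real.exp (-ρ * t))
    (Δ : ℝ → Matrix (Fin n) (Fin n) ℝ) (hΔcont : Continuous Δ)
    (hΔ : ∀ t : ℝ, 0 ≤ t →
      (∫ τ in (0 : ℝ)..t, ‖(Matrix.toEuclideanCLM (𝕜 := ℝ) (Δ τ))‖) ≤ α₀ * t + α₁)
    (hsmall : K * α₀ < ρ)
    (x : ℝ → EuclideanSpace ℝ (Fin n))
    (hx : ∀ t : ℝ, 0 ≤ t →
      HasDerivAt x ((Matrix.toEuclideanCLM (𝕜 := ℝ) (A₀ + Δ t)) (x t)) t) :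
    ∀ t : ℝ, 0 ≤ t →
      ‖x t‖ ≤ K * Real.exp (K * α₁) * ‖x 0‖ * Real.exp (-(ρ - K * α₀) * t) := by
  intro t ht
  set B := Matrix.toEuclideanCLM (𝕜 := ℝ) A₀ with hB
  set D : ℝ → (EuclideanSpace ℝ (Fin n) →L[ℝ] EuclideanSpace ℝ (Fin n)) :=
    fun s => Matrix.toEuclideanCLM (𝕜 := ℝ) (Δ s) with hD
  have hDcont : Continuous D := (continuous_matCLM n).comp hΔcont
  -- transported exponential bound
  have hBexp : ∀ s : ℝ, 0 ≤ s →
      ‖NormedSpace.exp (s • B)‖ ≤ K * Real.exp (-ρ * s) := by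
    intro s hs
    have h1 := hexp s hs
    rwa [toEuclideanCLM_exp, map_smul] at h1
  -- semigroup c s = exp (s • (-B))
  set c : ℝ → (EuclideanSpace ℝ (Fin n) →L[ℝ] EuclideanSpace ℝ (Fin n)) :=
    fun s => NormedSpace.exp (s • (-B)) with hc
  have hcd : ∀ s : ℝ, HasDerivAt c (c s * (-B)) s := fun s =>
    hasDerivAt_exp_smul_const (-B) s
  have hccont : Continuous c :=
    continuous_iff_continuousAt.2 fun s => (hcd s).continuousAt
  have hmul : ∀ p q : ℝ,
      NormedSpace.exp (p • B) * c q = NormedSpace.exp ((p - q) • B) := by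
    intro p q
    let +nondep : NormedAlgebra ℚ (EuclideanSpace ℝ (Fin n) →L[ℝ] EuclideanSpace ℝ (Fin n)) :=
      .restrictScalars ℚ ℝ _
    rw [hc, ← NormedSpace.exp_add_of_commute]
    · congr 1
      module
    · ext v
      simp [ContinuousLinearMap.mul_apply, map_smul, smul_smul, mul_comm]
  have hinv : ∀ p : ℝ, NormedSpace.exp (p • B) * c p = 1 := by
    intro p
    rw [hmul p p]
    have h0 : (p - p) • B = 0 := by rw [sub_self]; exact zero_smul ℝ B
    rw [h0, NormedSpace.exp_zero]
  have hxc : ∀ s : ℝ, 0 ≤ s → ContinuousAt x s := fun s hs => (hx s hs).continuousAt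
  set y : ℝ → EuclideanSpace ℝ (Fin n) := fun s => c s (x s) with hy
  have hyd : ∀ s : ℝ, 0 ≤ s → HasDerivAt y (c s (D s (x s))) s := by
    intro s hs
    have h1 := (hcd s).clm_apply (hx s hs)
    have h2 : (c s * (-B)) (x s) + c s ((Matrix.toEuclideanCLM (𝕜 := ℝ) (A₀ + Δ s)) (x s))
        = c s (D s (x s)) := by
      rw [map_add, ContinuousLinearMap.mul_apply, ContinuousLinearMap.add_apply, ← map_add,
        ContinuousLinearMap.neg_apply, neg_add_cancel_left]
    rw [← h2]
    exact h1
  -- continuity of the integrand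
  have hFc : ∀ s : ℝ, 0 ≤ s → ContinuousAt (fun s => c s (D s (x s))) s := by
    intro s hs
    have h1 : ContinuousAt (fun s => D s (x s)) s :=
      (isBoundedBilinearMap_apply.continuous.continuousAt).comp
        ((hDcont.continuousAt).prodMk (hxc s hs))
    exact (isBoundedBilinearMap_apply.continuous.continuousAt).comp
      ((hccont.continuousAt).prodMk h1)
  -- the key a priori integral inequality
  have key : ∀ t : ℝ, 0 ≤ t → Real.exp (ρ * t) * ‖x t‖ ≤
      K * ‖x 0‖ + ∫ s in (0:ℝ)..t, (K * ‖D s‖) * (Real.exp (ρ * s) * ‖x s‖) := by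
    intro t ht
    have hIcc : Set.uIcc (0:ℝ) t = Set.Icc 0 t := Set.uIcc_of_le ht
    have hFOn : ContinuousOn (fun s => c s (D s (x s))) (Set.uIcc 0 t) := by
      rw [hIcc]
      exact fun s hs => (hFc s hs.1).continuousWithinAt
    have hFint : IntervalIntegrable (fun s => c s (D s (x s))) MeasureTheory.volume 0 t :=
      hFOn.intervalIntegrable
    have hftc : (∫ s in (0:ℝ)..t, c s (D s (x s))) = y t - y 0 := by
      apply intervalIntegral.integral_eq_sub_of_hasDerivAt
      · intro s hs
        rw [hIcc] at hs
        exact hyd s hs.1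
      · exact hFint
    have hc0 : c 0 = 1 := by
      have h0 : (0:ℝ) • (-B) = 0 := zero_smul ℝ (-B)
      show NormedSpace.exp ((0:ℝ) • -B) = 1
      rw [h0, NormedSpace.exp_zero]
    have hy0 : y 0 = x 0 := by
      show c 0 (x 0) = x 0
      rw [hc0]; rfl
    -- x t = exp(t•B)(x 0) + exp(t•B)(∫ F)
    have hxrep : x t = NormedSpace.exp (t • B) (x 0)
        + ∫ s in (0:ℝ)..t, (NormedSpace.exp (t • B)) (c s (D s (x s))) := by
      have h3 : (∫ s in (0:ℝ)..t, (NormedSpace.exp (t • B)) (c s (D s (x s))))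
          = (NormedSpace.exp (t • B)) (∫ s in (0:ℝ)..t, c s (D s (x s))) :=
        (NormedSpace.exp (t • B)).intervalIntegral_comp_comm hFint
      have hxt : (NormedSpace.exp (t • B)) (y t) = x t := by
        show (NormedSpace.exp (t • B)) (c t (x t)) = x t
        rw [← ContinuousLinearMap.mul_apply, hinv t]; rfl
      rw [h3, hftc, map_sub, hxt, hy0]
      abel
    -- norm estimates
    have hbound : ‖x t‖ ≤ K * Real.exp (-ρ * t) * ‖x 0‖
        + ∫ s in (0:ℝ)..t, K * Real.exp (-ρ * (t - s)) * (‖D s‖ * ‖x s‖) := by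
      rw [hxrep]
      refine (norm_add_le _ _).trans (add_le_add ?_ ?_)
      · exact ((NormedSpace.exp (t • B)).le_opNorm (x 0)).trans
          (mul_le_mul_of_nonneg_right (hBexp t ht) (norm_nonneg _))
      · refine (intervalIntegral.norm_integral_le_integral_norm ht).trans ?_
        apply intervalIntegral.integral_mono_on ht
        · apply ContinuousOn.intervalIntegrable
          apply ContinuousOn.norm
          rw [hIcc]
          intro s hs
          exact ((isBoundedBilinearMap_apply.continuous.continuousAt).comp
            ((continuous_const.continuousAt).prodMk (hFc s hs.1))).continuousWithinAt
        · apply ContinuousOn.intervalIntegrable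
          have h1 : Continuous (fun u : ℝ => K * Real.exp (-ρ * (t - u))) := by continuity
          rw [hIcc]
          intro s hs
          exact ((h1.continuousAt).mul
            ((hDcont.norm.continuousAt).mul ((hxc s hs.1).norm))).continuousWithinAt
        · intro s hs
          have hrw : (NormedSpace.exp (t • B)) (c s (D s (x s)))
              = (NormedSpace.exp ((t - s) • B)) (D s (x s)) := by
            rw [← ContinuousLinearMap.mul_apply, hmul t s]
          rw [hrw]
          calc ‖(NormedSpace.exp ((t - s) • B)) (D s (x s))‖
              ≤ ‖NormedSpace.exp ((t - s) • B)‖ * ‖D s (x s)‖ :=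
                ContinuousLinearMap.le_opNorm _ _
            _ ≤ (K * Real.exp (-ρ * (t - s))) * (‖D s‖ * ‖x s‖) := by
                apply mul_le_mul (hBexp (t - s) (by linarith [hs.2]))
                  ((D s).le_opNorm (x s)) (norm_nonneg _)
                positivity
            _ = K * Real.exp (-ρ * (t - s)) * (‖D s‖ * ‖x s‖) := by ring
    -- multiply by exp (ρ t)
    have hmul2 : Real.exp (ρ * t) * ∫ s in (0:ℝ)..t, K * Real.exp (-ρ * (t - s)) * (‖D s‖ * ‖x s‖)
        = ∫ s in (0:ℝ)..t, (K * ‖D s‖) * (Real.exp (ρ * s) * ‖x s‖) := by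
      rw [← intervalIntegral.integral_const_mul]
      apply intervalIntegral.integral_congr
      intro s _
      have he : Real.exp (ρ * t) * Real.exp (-ρ * (t - s)) = Real.exp (ρ * s) := by
        rw [← Real.exp_add]; ring_nf
      calc Real.exp (ρ * t) * (K * Real.exp (-ρ * (t - s)) * (‖D s‖ * ‖x s‖))
          = (Real.exp (ρ * t) * Real.exp (-ρ * (t - s))) * (K * (‖D s‖ * ‖x s‖)) := by ring
        _ = Real.exp (ρ * s) * (K * (‖D s‖ * ‖x s‖)) := by rw [he]
        _ = (K * ‖D s‖) * (Real.exp (ρ * s) * ‖x s‖) := by ring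
    have h4 := mul_le_mul_of_nonneg_left hbound (Real.exp_pos (ρ * t)).le
    rw [mul_add, hmul2] at h4
    have h5 : Real.exp (ρ * t) * (K * Real.exp (-ρ * t) * ‖x 0‖) = K * ‖x 0‖ := by
      have : Real.exp (ρ * t) * Real.exp (-ρ * t) = 1 := by
        rw [← Real.exp_add]; ring_nf; exact Real.exp_zero
      calc Real.exp (ρ * t) * (K * Real.exp (-ρ * t) * ‖x 0‖)
          = (Real.exp (ρ * t) * Real.exp (-ρ * t)) * (K * ‖x 0‖) := by ring
        _ = K * ‖x 0‖ := by rw [this]; ring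
    rw [h5] at h4
    exact h4
  -- Gronwall setup
  set u : ℝ → ℝ := fun s => Real.exp (ρ * s) * ‖x (max s 0)‖ with hu
  have hucont : Continuous u := by
    apply Continuous.mul (by continuity)
    apply Continuous.norm
    apply continuous_iff_continuousAt.2
    intro s
    have hcomp : ContinuousAt (x ∘ fun s : ℝ => max s 0) s :=
      ContinuousAt.comp (hxc _ (le_max_right s 0))
        ((continuous_id.max continuous_const).continuousAt)
    exact hcomp
  have hgcont : Continuous (fun s : ℝ => K * ‖D s‖) := continuous_const.mul hDcont.norm
  have hg0 : ∀ s : ℝ, 0 ≤ K * ‖D s‖ := fun s => mul_nonneg (by linarith) (norm_nonneg _)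
  have hut : ∀ s : ℝ, 0 ≤ s → u s = Real.exp (ρ * s) * ‖x s‖ := by
    intro s hs
    show Real.exp (ρ * s) * ‖x (max s 0)‖ = Real.exp (ρ * s) * ‖x s‖
    rw [max_eq_left hs]
  have hhyp : ∀ t : ℝ, 0 ≤ t → u t ≤ K * ‖x 0‖ + ∫ s in (0:ℝ)..t, (K * ‖D s‖) * u s := by
    intro t ht
    have h3 : (∫ s in (0:ℝ)..t, (K * ‖D s‖) * u s)
        = ∫ s in (0:ℝ)..t, (K * ‖D s‖) * (Real.exp (ρ * s) * ‖x s‖) := by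
      apply intervalIntegral.integral_congr
      intro s hs
      rw [Set.uIcc_of_le ht] at hs
      show (K * ‖D s‖) * u s = (K * ‖D s‖) * (Real.exp (ρ * s) * ‖x s‖)
      rw [hut s hs.1]
    rw [hut t ht, h3]
    exact key t ht
  have hgr := gronwall_integral_aux u (fun s : ℝ => K * ‖D s‖) (K * ‖x 0‖)
    hucont hgcont hg0 hhyp t ht
  -- bound the exponent
  have hgint : (∫ s in (0:ℝ)..t, K * ‖D s‖) ≤ K * (α₀ * t + α₁) := by
    rw [intervalIntegral.integral_const_mul]
    have hD_eq : (∫ s in (0:ℝ)..t, ‖D s‖)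
        = ∫ τ in (0:ℝ)..t, ‖(Matrix.toEuclideanCLM (𝕜 := ℝ) (Δ τ))‖ := rfl
    rw [hD_eq]
    exact mul_le_mul_of_nonneg_left (hΔ t ht) (by linarith)
  have h6 : u t ≤ (K * ‖x 0‖) * Real.exp (K * (α₀ * t + α₁)) :=
    hgr.trans (mul_le_mul_of_nonneg_left (Real.exp_le_exp.2 hgint)
      (by positivity))
  rw [hut t ht] at h6
  -- final algebra
  have hx_eq : ‖x t‖ = Real.exp (-(ρ * t)) * (Real.exp (ρ * t) * ‖x t‖) := by
    rw [← mul_assoc, ← Real.exp_add]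
    simp
  rw [hx_eq]
  calc Real.exp (-(ρ * t)) * (Real.exp (ρ * t) * ‖x t‖)
      ≤ Real.exp (-(ρ * t)) * ((K * ‖x 0‖) * Real.exp (K * (α₀ * t + α₁))) :=
        mul_le_mul_of_nonneg_left h6 (Real.exp_pos _).le
    _ = K * Real.exp (K * α₁) * ‖x 0‖ * Real.exp (-(ρ - K * α₀) * t) := by
        have he : Real.exp (-(ρ * t)) * Real.exp (K * (α₀ * t + α₁))
            = Real.exp (K * α₁) * Real.exp (-(ρ - K * α₀) * t) := by
          rw [← Real.exp_add, ← Real.exp_add]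
          ring_nf
        calc Real.exp (-(ρ * t)) * ((K * ‖x 0‖) * Real.exp (K * (α₀ * t + α₁)))
            = (Real.exp (-(ρ * t)) * Real.exp (K * (α₀ * t + α₁))) * (K * ‖x 0‖) := by ring
          _ = (Real.exp (K * α₁) * Real.exp (-(ρ - K * α₀) * t)) * (K * ‖x 0‖) := by rw [he]
          _ = K * Real.exp (K * α₁) * ‖x 0‖ * Real.exp (-(ρ - K * α₀) * t) := by ring
end

section
/- Let A be a real n×n matrix. Then all off-diagonal entries of A are nonnegative (i.e., A is a Metzler matrix) if and only if for every t ≥ 0 all entries of the matrix exponential exp(tA) are nonnegative. -/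
open NormedSpace
open scoped Nat

theorem aux_pow_entry_nonneg {n : ℕ} (B : Matrix (Fin n) (Fin n) ℝ)
    (hB : ∀ i j, 0 ≤ B i j) (k : ℕ) : ∀ i j, 0 ≤ (B ^ k) i j := by
  induction k with
  | zero =>
      intro i j
      by_cases h : i = j <;> simp [pow_zero, Matrix.one_apply, h]
  | succ k ih =>
      intro i j
      rw [pow_succ, Matrix.mul_apply]
      exact Finset.sum_nonneg fun l _ => mul_nonneg (ih i l) (hB l j)

theorem aux_exp_entry_nonneg {n : ℕ} (B : Matrix (Fin n) (Fin n) ℝ)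
    (hB : ∀ i j, 0 ≤ B i j) (i j : Fin n) : 0 ≤ (exp B) i j := by
  letI : SeminormedRing (Matrix (Fin n) (Fin n) ℝ) := Matrix.linftyOpSemiNormedRing
  letI : NormedRing (Matrix (Fin n) (Fin n) ℝ) := Matrix.linftyOpNormedRing
  letI : NormedAlgebra ℝ (Matrix (Fin n) (Fin n) ℝ) := Matrix.linftyOpNormedAlgebra
  have hsum : Summable fun k : ℕ => ((k ! : ℝ)⁻¹) • B ^ k :=
    NormedSpace.expSeries_summable' (𝕂 := ℝ) B
  set L : Matrix (Fin n) (Fin n) ℝ →L[ℝ] ℝ :=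
    LinearMap.toContinuousLinearMap (Matrix.entryLinearMap ℝ ℝ i j) with hL
  have hLap : ∀ M : Matrix (Fin n) (Fin n) ℝ, L M = M i j := fun _ => rfl
  have h1 : (exp B) i j = ∑' k : ℕ, ((k ! : ℝ)⁻¹) * (B ^ k) i j := by
    have h2 : L (exp B) = ∑' k : ℕ, L (((k ! : ℝ)⁻¹) • B ^ k) := by
      rw [exp_eq_tsum ℝ]
      exact L.map_tsum hsum
    simpa [hLap, Matrix.smul_apply, smul_eq_mul] using h2
  rw [h1]
  exact tsum_nonneg fun k => mul_nonneg (by positivity) (aux_pow_entry_nonneg B hB k i j)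

/-- A real square matrix `A` is Metzler (all off-diagonal entries
nonnegative) if and only if all entries of `exp(tA)` are nonnegative for every `t ≥ 0`. -/
theorem metzler_iff_exp_nonneg
    (n : ℕ) (A : Matrix (Fin n) (Fin n) ℝ) :
    (∀ i j : Fin n, i ≠ j → 0 ≤ A i j) ↔
    (∀ t : ℝ, 0 ≤ t → ∀ i j : Fin n, 0 ≤ (NormedSpace.exp (t • A)) i j) := by
  constructor
  · intro h t ht i j
    set c : ℝ := ∑ k : Fin n, |A k k| with hc
    have hcnn : ∀ k : Fin n, |A k k| ≤ c :=
      fun k => Finset.single_le_sum (fun l _ => abs_nonneg (A l l)) (Finset.mem_univ k)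
    have hB : ∀ i j, 0 ≤ (A + c • (1 : Matrix (Fin n) (Fin n) ℝ)) i j := by
      intro i j
      by_cases hij : i = j
      · subst hij
        simp only [Matrix.add_apply, Matrix.smul_apply, Matrix.one_apply_eq, smul_eq_mul,
          mul_one]
        have := hcnn i
        have := neg_abs_le (A i i)
        linarith
      · simpa [Matrix.add_apply, Matrix.smul_apply, Matrix.one_apply_ne hij] using h i j hij
    have key : t • A = (-(t * c)) • (1 : Matrix (Fin n) (Fin n) ℝ)
        + t • (A + c • (1 : Matrix (Fin n) (Fin n) ℝ)) := by
      module
    have hcomm : Commute ((-(t * c)) • (1 : Matrix (Fin n) (Fin n) ℝ))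
        (t • (A + c • (1 : Matrix (Fin n) (Fin n) ℝ))) :=
      ((Commute.one_left _).smul_left _).smul_right _
    rw [key, Matrix.exp_add_of_commute _ _ hcomm]
    rw [Matrix.smul_one_eq_diagonal, Matrix.exp_diagonal, Matrix.diagonal_mul]
    refine mul_nonneg ?_ (aux_exp_entry_nonneg _ (fun i j => smul_nonneg ht (hB i j)) i j)
    have : (exp fun _ : Fin n => -(t * c)) i = Real.exp (-(t * c)) := by
      rw [Pi.exp_def, Real.exp_eq_exp_ℝ]
    rw [this]
    exact (Real.exp_pos _).le
  · intro h i j hij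
    letI : SeminormedRing (Matrix (Fin n) (Fin n) ℝ) := Matrix.linftyOpSemiNormedRing
    letI : NormedRing (Matrix (Fin n) (Fin n) ℝ) := Matrix.linftyOpNormedRing
    letI : NormedAlgebra ℝ (Matrix (Fin n) (Fin n) ℝ) := Matrix.linftyOpNormedAlgebra
    set f : ℝ → ℝ := fun u => (exp (u • A)) i j with hf
    have hd0 : HasDerivAt (fun u : ℝ => exp (u • A)) (exp ((0:ℝ) • A) * A) 0 :=
      hasDerivAt_exp_smul_const (𝕂 := ℝ) A 0
    set L : Matrix (Fin n) (Fin n) ℝ →L[ℝ] ℝ :=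
      LinearMap.toContinuousLinearMap (Matrix.entryLinearMap ℝ ℝ i j) with hL
    have hd : HasDerivAt f (A i j) 0 := by
      have := (L.hasFDerivAt.comp_hasDerivAt 0 hd0)
      have he : L (exp ((0:ℝ) • A) * A) = A i j := by
        show (exp ((0:ℝ) • A) * A) i j = A i j
        rw [zero_smul, exp_zero, one_mul]
      replace this := this.congr_deriv he
      exact this
    have hf0 : f 0 = 0 := by
      show (exp ((0:ℝ) • A)) i j = 0
      rw [zero_smul, exp_zero]
      exact Matrix.one_apply_ne hij
    have hslope : Filter.Tendsto (slope f 0) (nhdsWithin 0 (Set.Ioi 0)) (nhds (A i j)) :=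
      (hasDerivAt_iff_tendsto_slope.mp hd).mono_left
        (nhdsWithin_mono 0 (fun x hx => ne_of_gt hx))
    refine ge_of_tendsto hslope ?_
    filter_upwards [self_mem_nhdsWithin] with u hu
    have hu' : (0:ℝ) < u := hu
    rw [slope_def_field, hf0, sub_zero, sub_zero]
    exact div_nonneg (h u hu'.le i j) hu'.le
end

section
/- Let M : [0,∞) → (n×n real matrices) and c : [0,∞) → ℝⁿ be continuous, and suppose that for every t ≥ 0 the matrix M(t) is Metzler (all off-diagonal entries nonnegative) and all components of c(t) are nonnegative. Let x : [0,∞) → ℝⁿ be differentiable with x'(t) = M(t)x(t) + c(t) for all t ≥ 0. If all components of x(0) are nonnegative, then all components of x(t) are nonnegative for every t ≥ 0. -/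
set_option maxHeartbeats 1000000

open Set Filter Finset
open scoped Topology

/-- positivity of linear time-varying systems: if `M(t)` is Metzler and
`c(t)` is componentwise nonnegative for all `t ≥ 0`, then any solution of
`x' = M(t)x + c(t)` with componentwise nonnegative initial state stays componentwise
nonnegative for all `t ≥ 0`. -/
theorem metzler_system_positive
    (n : ℕ) (M : ℝ → Matrix (Fin n) (Fin n) ℝ) (c : ℝ → (Fin n → ℝ))
    (hMcont : Continuous M) (hccont : Continuous c)
    (hMetzler : ∀ t : ℝ, 0 ≤ t → ∀ i j : Fin n, i ≠ j → 0 ≤ M t i j)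
    (hc : ∀ t : ℝ, 0 ≤ t → ∀ i : Fin n, 0 ≤ c t i)
    (x : ℝ → (Fin n → ℝ))
    (hx : ∀ t : ℝ, 0 ≤ t → HasDerivAt x (Matrix.mulVec (M t) (x t) + c t) t)
    (hx0 : ∀ i : Fin n, 0 ≤ x 0 i) :
    ∀ t : ℝ, 0 ≤ t → ∀ i : Fin n, 0 ≤ x t i := by
  intro T hT i0
  haveI : Nonempty (Fin n) := ⟨i0⟩
  -- the "distance to the nonnegative orthant" function
  set φ : (Fin n → ℝ) → ℝ := fun y => Finset.univ.sup' Finset.univ_nonempty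
    (fun i => max (-(y i)) 0) with hφdef
  have hφ1' : ∀ (y : Fin n → ℝ) (i : Fin n), max (-(y i)) 0 ≤ φ y := by
    intro y i
    exact Finset.le_sup' (fun j => max (-(y j)) 0) (Finset.mem_univ i)
  have hφ0 : ∀ y, 0 ≤ φ y := fun y =>
    le_trans (le_max_right _ _) (hφ1' y i0)
  have hφ1 : ∀ y (i : Fin n), -(y i) ≤ φ y := fun y i =>
    le_trans (le_max_left _ _) (hφ1' y i)
  have hφle : ∀ (y : Fin n → ℝ) (r : ℝ), 0 ≤ r → (∀ i, -(y i) ≤ r) → φ y ≤ r := by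
    intro y r hr h
    exact Finset.sup'_le _ _ fun i _ => max_le (h i) hr
  have hlip : ∀ y z : Fin n → ℝ, φ y ≤ φ z + ‖y - z‖ := by
    intro y z
    refine hφle _ _ (add_nonneg (hφ0 z) (norm_nonneg _)) fun i => ?_
    have h1 : -(y i) = -(z i) + (z i - y i) := by ring
    have h2 : z i - y i ≤ ‖y - z‖ := by
      have := norm_le_pi_norm (y - z) i
      have h3 : |y i - z i| ≤ ‖y - z‖ := by simpa [Real.norm_eq_abs] using this
      have := abs_le.1 h3
      linarith [this.1]
    linarith [hφ1 z i]
  have hφlip : LipschitzWith 1 φ := by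
    apply LipschitzWith.of_dist_le_mul
    intro y z
    rw [Real.dist_eq, NNReal.coe_one, one_mul, dist_eq_norm]
    rw [abs_sub_le_iff]
    constructor
    · linarith [hlip y z]
    · have := hlip z y
      rw [show ‖z - y‖ = ‖y - z‖ from norm_sub_rev z y] at this
      linarith
  -- continuity of x on [0, T]
  have hxc : ContinuousOn x (Icc 0 T) := fun s hs =>
    ((hx s hs.1).continuousAt).continuousWithinAt
  -- bound on the entries of M on [0, T]
  obtain ⟨K, hK0, hKb⟩ : ∃ K : ℝ, 0 ≤ K ∧ ∀ s ∈ Icc (0:ℝ) T, ∀ i j, |M s i j| ≤ K := by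
    have hN : Continuous fun s => (fun p : Fin n × Fin n => M s p.1 p.2) :=
      continuous_pi fun p => hMcont.matrix_elem p.1 p.2
    obtain ⟨C, hC⟩ := (isCompact_Icc (a := (0:ℝ)) (b := T)).exists_bound_of_continuousOn
      hN.continuousOn
    refine ⟨max C 0, le_max_right _ _, fun s hs i j => ?_⟩
    have h1 : |M s i j| ≤ ‖fun p : Fin n × Fin n => M s p.1 p.2‖ := by
      simpa [Real.norm_eq_abs] using
        norm_le_pi_norm (fun p : Fin n × Fin n => M s p.1 p.2) (i, j)
    exact h1.trans ((hC s hs).trans (le_max_left _ _))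
  set L : ℝ := K * n + K with hLdef
  have hL0 : 0 ≤ L := by positivity
  set f : ℝ → ℝ := fun s => φ (x s) with hfdef
  have hfc : ContinuousOn f (Icc 0 T) := hφlip.continuous.comp_continuousOn hxc
  have hf0 : ∀ s, 0 ≤ f s := fun s => hφ0 (x s)
  -- key Dini derivative estimate
  have key : ∀ s ∈ Ico (0:ℝ) T, ∀ r, L * f s < r →
      ∃ᶠ z in 𝓝[>] s, (z - s)⁻¹ * (f z - f s) < r := by
    intro s hs r hr
    set v : Fin n → ℝ := Matrix.mulVec (M s) (x s) + c s with hvdef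
    have hds : HasDerivAt x v s := hx s hs.1
    have hsmem : s ∈ Icc (0:ℝ) T := ⟨hs.1, hs.2.le⟩
    set ε' : ℝ := r - L * f s with hε'def
    have hε' : 0 < ε' := by simp [hε'def]; linarith
    -- little-o from differentiability
    have hlo := hasDerivAt_iff_isLittleO.1 hds
    have hev1 : ∀ᶠ z in 𝓝 s, ‖x z - x s - (z - s) • v‖ ≤ ε' / 2 * ‖z - s‖ :=
      hlo.bound (by positivity)
    have hev2 : ∀ᶠ z in 𝓝[>] s, ‖x z - x s - (z - s) • v‖ ≤ ε' / 2 * ‖z - s‖ :=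
      nhdsWithin_le_nhds hev1
    have hev3 : ∀ᶠ z in 𝓝[>] s, z - s < 1 / (K + 1) := by
      have : ∀ᶠ z in 𝓝 s, z - s < 1 / (K + 1) := by
        have hcont : Continuous fun z : ℝ => z - s := continuous_id.sub continuous_const
        have : (fun z : ℝ => z - s) ⁻¹' (Iio (1 / (K + 1))) ∈ 𝓝 s := by
          apply hcont.continuousAt.preimage_mem_nhds
          apply Iio_mem_nhds
          simp only [sub_self]
          positivity
        filter_upwards [this] with z hz using hz
      exact nhdsWithin_le_nhds this
    have hev4 : ∀ᶠ z in 𝓝[>] s, s < z := eventually_mem_nhdsWithin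
    refine ((hev2.and (hev3.and hev4)).mono ?_).frequently
    rintro z ⟨h1, h2, h3⟩
    set h : ℝ := z - s with hhdef
    have hh0 : 0 < h := by simp [hhdef]; linarith
    have hhK : h * K < 1 := by
      have : h < 1 / (K + 1) := h2
      calc h * K ≤ h * (K + 1) := by nlinarith
        _ < (1 / (K + 1)) * (K + 1) := by
            apply mul_lt_mul_of_pos_right this; positivity
        _ = 1 := by field_simp
    -- the discrete step estimate
    have step : φ (x s + h • v) ≤ f s + h * (L * f s) := by
      refine hφle _ _ (add_nonneg (hf0 s) (mul_nonneg hh0.le (mul_nonneg hL0 (hf0 s)))) fun i => ?_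
      have hv_i : v i = (∑ j, M s i j * x s j) + c s i := by
        simp [hvdef, Matrix.mulVec, dotProduct]
      have hsum : ∑ j, M s i j * x s j
          = M s i i * x s i + ∑ j ∈ Finset.univ.erase i, M s i j * x s j :=
        (Finset.add_sum_erase _ _ (Finset.mem_univ i)).symm
      -- bound the off-diagonal sum
      have hoff : ∑ j ∈ Finset.univ.erase i, M s i j * x s j ≥ -(K * n * f s) := by
        have hterm : ∀ j ∈ Finset.univ.erase i, M s i j * x s j ≥ M s i j * (-(f s)) := by
          intro j hj
          have hMij : 0 ≤ M s i j :=
            hMetzler s hs.1 i j (Ne.symm (Finset.ne_of_mem_erase hj))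
          apply mul_le_mul_of_nonneg_left _ hMij
          linarith [hφ1 (x s) j]
        have h1 : ∑ j ∈ Finset.univ.erase i, M s i j * x s j
            ≥ ∑ j ∈ Finset.univ.erase i, M s i j * (-(f s)) :=
          Finset.sum_le_sum hterm
        have h2 : ∑ j ∈ Finset.univ.erase i, M s i j * (-(f s))
            = -((∑ j ∈ Finset.univ.erase i, M s i j) * f s) := by
          rw [Finset.sum_mul]; simp [mul_comm, mul_neg]
        have h3 : ∑ j ∈ Finset.univ.erase i, M s i j ≤ K * n := by
          calc ∑ j ∈ Finset.univ.erase i, M s i j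
              ≤ ∑ _j ∈ Finset.univ.erase i, K :=
                Finset.sum_le_sum fun j hj => (abs_le.1 (hKb s hsmem i j)).2
            _ = (Finset.univ.erase i).card * K := by
                rw [Finset.sum_const, nsmul_eq_mul]
            _ ≤ n * K := by
                apply mul_le_mul_of_nonneg_right _ hK0
                have h5 := Finset.card_erase_le (a := i) (s := (Finset.univ : Finset (Fin n)))
                have hcard : (Finset.univ : Finset (Fin n)).card = n := Finset.card_univ.trans
                  (Fintype.card_fin n)
                exact_mod_cast h5.trans_eq hcard
            _ = K * n := by ring
        have h4 : (∑ j ∈ Finset.univ.erase i, M s i j) * f s ≤ K * n * f s :=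
          mul_le_mul_of_nonneg_right h3 (hf0 s)
        linarith
      -- bound the diagonal term
      have hdiag : x s i * (1 + h * M s i i) ≥ -(f s) * (1 + h * K) := by
        have hMii := abs_le.1 (hKb s hsmem i i)
        have hpos : 0 ≤ 1 + h * M s i i := by nlinarith
        have h1 : x s i * (1 + h * M s i i) ≥ (-(f s)) * (1 + h * M s i i) := by
          apply mul_le_mul_of_nonneg_right _ hpos
          linarith [hφ1 (x s) i]
        have h2 : (-(f s)) * (1 + h * M s i i) ≥ (-(f s)) * (1 + h * K) := by
          nlinarith [mul_nonneg (mul_nonneg (hf0 s) hh0.le) (sub_nonneg.2 hMii.2)]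
        linarith
      have hci : 0 ≤ c s i := hc s hs.1 i
      have hval : (x s + h • v) i = x s i + h * v i := by simp
      rw [hval, hv_i, hsum]
      have expand : x s i + h * (M s i i * x s i
            + ∑ j ∈ Finset.univ.erase i, M s i j * x s j + c s i)
          = x s i * (1 + h * M s i i)
            + h * (∑ j ∈ Finset.univ.erase i, M s i j * x s j) + h * c s i := by ring
      rw [expand]
      have hb1 : h * (∑ j ∈ Finset.univ.erase i, M s i j * x s j) ≥ h * (-(K * n * f s)) :=
        mul_le_mul_of_nonneg_left hoff hh0.le
      have hb2 : 0 ≤ h * c s i := by positivity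
      have : x s i * (1 + h * M s i i)
            + h * (∑ j ∈ Finset.univ.erase i, M s i j * x s j) + h * c s i
          ≥ -(f s) * (1 + h * K) + h * (-(K * n * f s)) + 0 := by
        gcongr <;> linarith
      have heq : -(f s) * (1 + h * K) + h * (-(K * n * f s)) + 0
          = -(f s + h * (L * f s)) := by rw [hLdef]; ring
      linarith [heq ▸ this]
    -- combine with the little-o estimate
    have hfz : f z ≤ φ (x s + h • v) + ‖x z - (x s + h • v)‖ := by
      have := hlip (x z) (x s + h • v)
      simpa [hfdef] using this
    have hnorm : ‖x z - (x s + h • v)‖ ≤ ε' / 2 * h := by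
      have heqv : x z - (x s + h • v) = x z - x s - (z - s) • v := by
        rw [hhdef]; abel
      rw [heqv]
      calc ‖x z - x s - (z - s) • v‖ ≤ ε' / 2 * ‖z - s‖ := h1
        _ = ε' / 2 * h := by rw [Real.norm_eq_abs, abs_of_pos (hhdef ▸ hh0)]
    have hfz2 : f z - f s ≤ h * (L * f s) + ε' / 2 * h := by
      have := hfz.trans (add_le_add step hnorm)
      linarith
    rw [show (z - s)⁻¹ = h⁻¹ from by rw [hhdef], inv_mul_lt_iff₀ hh0]
    calc f z - f s ≤ h * (L * f s) + ε' / 2 * h := hfz2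
      _ = h * (L * f s + ε' / 2) := by ring
      _ < h * r := by
          apply mul_lt_mul_of_pos_left _ hh0
          rw [hε'def]
          have hgen : ∀ A R : ℝ, A < R → A + (R - A) / 2 < R := fun A R hAR => by linarith
          exact hgen _ _ hr
  -- apply Grönwall
  have hgron := le_gronwallBound_of_liminf_deriv_right_le (f := f)
    (f' := fun s => L * f s) (δ := 0) (K := L) (ε := 0) (a := 0) (b := T)
    hfc key
    (by
      refine hφle _ _ le_rfl fun i => ?_
      linarith [hx0 i])
    (fun s _ => by simp)
  have hfT : f T ≤ 0 := by
    have := hgron T ⟨hT, le_rfl⟩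
    rwa [sub_zero, gronwallBound_ε0_δ0] at this
  have := hφ1 (x T) i0
  have hfT0 : f T = 0 := le_antisymm hfT (hf0 T)
  rw [hfdef] at hfT0
  simp only at hfT0
  linarith [hfT0 ▸ this]
end

section
/- Let N > 0 and let μ, ω, β, σ, γ ≥ 0. Suppose S, E, I, R : [0,∞) → ℝ are differentiable, V : [0,∞) → ℝ is continuous with 0 ≤ V(t) ≤ 1 for all t ≥ 0, and for all t ≥ 0: S'(t) = -μS(t) + ωR(t) - βS(t)I(t)/N + μN(1 - V(t)), E'(t) = βS(t)I(t)/N - (μ+σ)E(t), I'(t) = -(μ+γ)I(t) + σE(t), R'(t) = -(μ+ω)R(t) + γI(t) + μN V(t). If S(0), E(0), I(0), R(0) ≥ 0 and S(0)+E(0)+I(0)+R(0) = N, then for all t ≥ 0 one has 0 ≤ S(t) ≤ N, 0 ≤ E(t) ≤ N, 0 ≤ I(t) ≤ N and 0 ≤ R(t) ≤ N; in particular the SEIR model is a positive system and all partial populations are uniformly bounded by N. -/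
open Set Real Filter Topology

lemma seir_aux_deriv_nonpos {h : ℝ → ℝ} {d t₀ : ℝ} (ht₀ : 0 < t₀)
    (hd : HasDerivAt h d t₀) (hnn : ∀ t, 0 ≤ t → t < t₀ → 0 ≤ h t) (h0 : h t₀ = 0) :
    d ≤ 0 := by
  have hslope : Tendsto (slope h t₀) (𝓝[≠] t₀) (𝓝 d) :=
    hasDerivAt_iff_tendsto_slope.1 hd
  have hsub : 𝓝[<] t₀ ≤ 𝓝[≠] t₀ := nhdsWithin_mono _ fun x hx => ne_of_lt hx
  have h2 : Tendsto (slope h t₀) (𝓝[<] t₀) (𝓝 d) := hslope.mono_left hsub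
  have hmem : Ioo (0:ℝ) t₀ ∈ 𝓝[<] t₀ := Ioo_mem_nhdsLT_of_mem ⟨ht₀, le_refl _⟩
  have hev : ∀ᶠ t in 𝓝[<] t₀, slope h t₀ t ≤ 0 := by
    filter_upwards [hmem] with t ht
    rw [slope_def_field, h0, sub_zero]
    exact div_nonpos_of_nonneg_of_nonpos (hnn t ht.1.le ht.2) (by linarith [ht.2])
  exact le_of_tendsto h2 hev

set_option maxHeartbeats 1000000 in
/-- With nonnegative parameters, a vaccination function with values in
`[0,1]`, nonnegative initial populations summing to `N`, the true-mass action SEIR model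
is a positive system and all partial populations remain in `[0, N]` for all `t ≥ 0`. -/
theorem seir_positive_and_bounded
    (N μ ω β σ γ : ℝ) (hN : 0 < N)
    (hμ : 0 ≤ μ) (hω : 0 ≤ ω) (hβ : 0 ≤ β) (hσ : 0 ≤ σ) (hγ : 0 ≤ γ)
    (S E I R V : ℝ → ℝ)
    (hVcont : Continuous V) (hV : ∀ t ≥ (0 : ℝ), 0 ≤ V t ∧ V t ≤ 1)
    (hS : ∀ t ≥ (0 : ℝ), HasDerivAt S
      (-μ * S t + ω * R t - β * S t * I t / N + μ * N * (1 - V t)) t)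
    (hE : ∀ t ≥ (0 : ℝ), HasDerivAt E
      (β * S t * I t / N - (μ + σ) * E t) t)
    (hI : ∀ t ≥ (0 : ℝ), HasDerivAt I
      (-(μ + γ) * I t + σ * E t) t)
    (hR : ∀ t ≥ (0 : ℝ), HasDerivAt R
      (-(μ + ω) * R t + γ * I t + μ * N * V t) t)
    (hS0 : 0 ≤ S 0) (hE0 : 0 ≤ E 0) (hI0 : 0 ≤ I 0) (hR0 : 0 ≤ R 0)
    (hsum : S 0 + E 0 + I 0 + R 0 = N) :
    ∀ t ≥ (0 : ℝ),
      (0 ≤ S t ∧ S t ≤ N) ∧ (0 ≤ E t ∧ E t ≤ N) ∧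
      (0 ≤ I t ∧ I t ≤ N) ∧ (0 ≤ R t ∧ R t ≤ N) := by
  -- continuity on [0, ∞)
  have hScont : ∀ T : ℝ, ContinuousOn S (Icc 0 T) := fun T t ht =>
    ((hS t ht.1).continuousAt).continuousWithinAt
  have hEcont : ∀ T : ℝ, ContinuousOn E (Icc 0 T) := fun T t ht =>
    ((hE t ht.1).continuousAt).continuousWithinAt
  have hIcont : ∀ T : ℝ, ContinuousOn I (Icc 0 T) := fun T t ht =>
    ((hI t ht.1).continuousAt).continuousWithinAt
  have hRcont : ∀ T : ℝ, ContinuousOn R (Icc 0 T) := fun T t ht =>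
    ((hR t ht.1).continuousAt).continuousWithinAt
  -- Step 1: positivity on every [0, T]
  have key : ∀ T : ℝ, ∀ t ∈ Icc (0:ℝ) T, 0 ≤ S t ∧ 0 ≤ E t ∧ 0 ≤ I t ∧ 0 ≤ R t := by
    intro T
    -- bound on [0, T]
    obtain ⟨B, hB0, hB⟩ : ∃ B : ℝ, 0 ≤ B ∧ ∀ t ∈ Icc (0:ℝ) T,
        |S t| ≤ B ∧ |E t| ≤ B ∧ |I t| ≤ B ∧ |R t| ≤ B := by
      obtain ⟨B1, h1⟩ := isCompact_Icc.exists_bound_of_continuousOn (hScont T)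
      obtain ⟨B2, h2⟩ := isCompact_Icc.exists_bound_of_continuousOn (hEcont T)
      obtain ⟨B3, h3⟩ := isCompact_Icc.exists_bound_of_continuousOn (hIcont T)
      obtain ⟨B4, h4⟩ := isCompact_Icc.exists_bound_of_continuousOn (hRcont T)
      refine ⟨max (max B1 B2) (max B3 B4) ⊔ 0, le_max_right _ _, fun t ht => ?_⟩
      have e1 := h1 t ht; have e2 := h2 t ht; have e3 := h3 t ht; have e4 := h4 t ht
      simp only [Real.norm_eq_abs] at e1 e2 e3 e4
      refine ⟨?_, ?_, ?_, ?_⟩ <;>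
        [ exact le_trans e1 (le_max_of_le_left ((le_max_left _ _).trans (le_max_left _ _)));
          exact le_trans e2 (le_max_of_le_left ((le_max_right _ _).trans (le_max_left _ _)));
          exact le_trans e3 (le_max_of_le_left ((le_max_left _ _).trans (le_max_right _ _)));
          exact le_trans e4 (le_max_of_le_left ((le_max_right _ _).trans (le_max_right _ _))) ]
    set c : ℝ := ω + σ + γ + β * B / N + 1 with hc_def
    have hc_pos : 0 < c := by
      have : 0 ≤ β * B / N := div_nonneg (mul_nonneg hβ hB0) hN.le
      positivity
    clear_value c
    set m : ℝ → ℝ := fun t => min (min (S t) (E t)) (min (I t) (R t)) with hm_def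
    have hmcont : ContinuousOn m (Icc 0 T) :=
      ((hScont T).inf (hEcont T)).inf ((hIcont T).inf (hRcont T))
    have hm_le_S : ∀ t, m t ≤ S t := fun t => le_trans (min_le_left _ _) (min_le_left _ _)
    have hm_le_E : ∀ t, m t ≤ E t := fun t => le_trans (min_le_left _ _) (min_le_right _ _)
    have hm_le_I : ∀ t, m t ≤ I t := fun t => le_trans (min_le_right _ _) (min_le_left _ _)
    have hm_le_R : ∀ t, m t ≤ R t := fun t => le_trans (min_le_right _ _) (min_le_right _ _)
    have hm0 : 0 ≤ m 0 := le_min (le_min hS0 hE0) (le_min hI0 hR0)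
    -- main ε-claim
    have pos_eps : ∀ ε > (0:ℝ), ∀ t ∈ Icc (0:ℝ) T, 0 < m t + ε * Real.exp (2 * c * t) := by
      intro ε hε
      by_contra hcon
      push_neg at hcon
      obtain ⟨t₁, ht₁, ht₁le⟩ := hcon
      set g : ℝ → ℝ := fun t => m t + ε * Real.exp (2 * c * t) with hg_def
      have hgcont : ContinuousOn g (Icc 0 T) :=
        hmcont.add (Continuous.continuousOn (continuous_const.mul (Real.continuous_exp.comp (continuous_const.mul continuous_id))))
      set A : Set ℝ := Icc (0:ℝ) T ∩ g ⁻¹' (Iic 0) with hA_def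
      have hA_closed : IsClosed A :=
        hgcont.preimage_isClosed_of_isClosed isClosed_Icc isClosed_Iic
      have hA_ne : A.Nonempty := ⟨t₁, ht₁, ht₁le⟩
      have hA_bdd : BddBelow A := ⟨0, fun x hx => hx.1.1⟩
      set t₀ : ℝ := sInf A with ht₀_def
      have ht₀A : t₀ ∈ A := hA_closed.csInf_mem hA_ne hA_bdd
      have ht₀Icc : t₀ ∈ Icc (0:ℝ) T := ht₀A.1
      have hgt₀ : g t₀ ≤ 0 := ht₀A.2
      have ht₀pos : 0 < t₀ := by
        rcases lt_or_eq_of_le ht₀Icc.1 with h | h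
        · exact h
        · exfalso
          have : g 0 ≤ 0 := by rwa [← h] at hgt₀
          have : 0 < g 0 := by
            simp only [hg_def, mul_zero, Real.exp_zero, mul_one]
            linarith
          linarith
      have hbefore : ∀ t, 0 ≤ t → t < t₀ → 0 < g t := by
        intro t ht htlt
        by_contra hc
        push_neg at hc
        have : t ∈ A := ⟨⟨ht, htlt.le.trans ht₀Icc.2⟩, hc⟩
        have := csInf_le hA_bdd this
        linarith
      -- g t₀ = 0 by left continuity
      have hg0 : g t₀ = 0 := by
        refine le_antisymm hgt₀ ?_
        have hle : 𝓝[<] t₀ ≤ 𝓝[Icc (0:ℝ) T] t₀ :=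
          nhdsWithin_le_of_mem (mem_of_superset
            (Ioo_mem_nhdsLT_of_mem ⟨ht₀pos, le_refl _⟩)
            (fun x hx => ⟨hx.1.le, hx.2.le.trans ht₀Icc.2⟩))
        have htend : Tendsto g (𝓝[<] t₀) (𝓝 (g t₀)) :=
          (hgcont t₀ ht₀Icc).mono_left hle
        refine ge_of_tendsto htend ?_
        filter_upwards [Ioo_mem_nhdsLT_of_mem (⟨ht₀pos, le_refl _⟩ : t₀ ∈ Ioc 0 t₀)]
          with t ht
        exact (hbefore t ht.1.le ht.2).le
      set δ : ℝ := ε * Real.exp (2 * c * t₀) with hδ_def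
      have hδpos : 0 < δ := mul_pos hε (Real.exp_pos _)
      have hmt₀ : m t₀ = -δ := by
        have : m t₀ + δ = 0 := hg0
        linarith
      clear_value δ
      -- bounds at t₀
      obtain ⟨hSb, hEb, hIb, hRb⟩ := hB t₀ ht₀Icc
      have hSlo : -δ ≤ S t₀ := hmt₀ ▸ hm_le_S t₀
      have hElo : -δ ≤ E t₀ := hmt₀ ▸ hm_le_E t₀
      have hIlo : -δ ≤ I t₀ := hmt₀ ▸ hm_le_I t₀
      have hRlo : -δ ≤ R t₀ := hmt₀ ▸ hm_le_R t₀
      have hSub : S t₀ ≤ B := (abs_le.1 hSb).2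
      have hEub : E t₀ ≤ B := (abs_le.1 hEb).2
      have hIub : I t₀ ≤ B := (abs_le.1 hIb).2
      have hRub : R t₀ ≤ B := (abs_le.1 hRb).2
      have hIlb : -B ≤ I t₀ := (abs_le.1 hIb).1
      have hV₀ := hV t₀ ht₀pos.le
      -- derivative of ε * exp(2ct)
      have hexp : HasDerivAt (fun t => ε * Real.exp (2 * c * t)) (2 * c * δ) t₀ := by
        have h1 : HasDerivAt (fun t : ℝ => 2 * c * t) (2 * c) t₀ := by
          simpa using (hasDerivAt_id t₀).const_mul (2 * c)
        have h2 := (Real.hasDerivAt_exp (2 * c * t₀)).comp t₀ h1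
        have h3 := h2.const_mul ε
        rw [show ε * (rexp (2 * c * t₀) * (2 * c)) = 2 * c * δ by rw [hδ_def]; ring] at h3
        exact h3
      -- the component attaining the minimum
      have hattain : S t₀ = -δ ∨ E t₀ = -δ ∨ I t₀ = -δ ∨ R t₀ = -δ := by
        have hm' := hmt₀
        simp only [hm_def] at hm'
        rcases min_cases (min (S t₀) (E t₀)) (min (I t₀) (R t₀)) with ⟨h', _⟩ | ⟨h', _⟩ <;>
          rw [h'] at hm'
        · rcases min_cases (S t₀) (E t₀) with ⟨h'', _⟩ | ⟨h'', _⟩ <;> rw [h''] at hm'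
          · exact Or.inl hm'
          · exact Or.inr (Or.inl hm')
        · rcases min_cases (I t₀) (R t₀) with ⟨h'', _⟩ | ⟨h'', _⟩ <;> rw [h''] at hm'
          · exact Or.inr (Or.inr (Or.inl hm'))
          · exact Or.inr (Or.inr (Or.inr hm'))
      have hBdivnn : 0 ≤ β * B * δ / N := by positivity
      -- generic: for the attaining component X with derivative expr,
      -- seir_aux_deriv_nonpos gives expr + 2cδ ≤ 0, contradiction
      rcases hattain with hX | hX | hX | hX
      · -- S attains
        have hd := (hS t₀ ht₀pos.le).add hexp
        have hle0 : (-μ * S t₀ + ω * R t₀ - β * S t₀ * I t₀ / N + μ * N * (1 - V t₀))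
            + 2 * c * δ ≤ 0 := by
          refine seir_aux_deriv_nonpos ht₀pos hd (fun t ht htlt => ?_) (by simp only [Pi.add_apply]; rw [hX]; linarith)
          have := hbefore t ht htlt
          have := hm_le_S t
          simp only [hg_def, Pi.add_apply] at *
          linarith
        have h1 : 0 ≤ μ * δ := mul_nonneg hμ hδpos.le
        have h2 : 0 ≤ ω * (R t₀ + δ) := mul_nonneg hω (by linarith)
        have h3 : 0 ≤ μ * N * (1 - V t₀) :=
          mul_nonneg (mul_nonneg hμ hN.le) (by linarith [hV₀.2])
        have h4 : 0 ≤ β * δ * (I t₀ + B) / N :=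
          div_nonneg (mul_nonneg (mul_nonneg hβ hδpos.le) (by linarith)) hN.le
        rw [hX] at hle0
        rw [hc_def] at hle0
        have hexpand : -μ * -δ + ω * R t₀ - β * -δ * I t₀ / N + μ * N * (1 - V t₀)
            + 2 * (ω + σ + γ + β * B / N + 1) * δ
            = μ * δ + (ω * (R t₀ + δ)) + μ * N * (1 - V t₀)
              + β * δ * (I t₀ + B) / N + β * B * δ / N
              + (ω + 2*σ + 2*γ + 2) * δ := by
          field_simp
          ring
        rw [hexpand] at hle0
        nlinarith [mul_nonneg hσ hδpos.le, mul_nonneg hγ hδpos.le, mul_nonneg hω hδpos.le]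
      · -- E attains
        have hd := (hE t₀ ht₀pos.le).add hexp
        have hle0 : (β * S t₀ * I t₀ / N - (μ + σ) * E t₀) + 2 * c * δ ≤ 0 := by
          refine seir_aux_deriv_nonpos ht₀pos hd (fun t ht htlt => ?_) (by simp only [Pi.add_apply]; rw [hX]; linarith)
          have := hbefore t ht htlt
          have := hm_le_E t
          simp only [hg_def, Pi.add_apply] at *
          linarith
        have hSI : -(δ * B) ≤ S t₀ * I t₀ := by
          nlinarith [mul_nonneg (by linarith : (0:ℝ) ≤ S t₀ + δ) (by linarith : (0:ℝ) ≤ I t₀ + δ),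
            mul_nonneg hδpos.le (by linarith : (0:ℝ) ≤ B - I t₀),
            mul_nonneg hδpos.le (by linarith : (0:ℝ) ≤ B - S t₀), hδpos.le]
        have h4 : 0 ≤ (β * (S t₀ * I t₀) + β * (δ * B)) / N :=
          div_nonneg (by nlinarith [mul_le_mul_of_nonneg_left hSI hβ]) hN.le
        have h5 : 0 ≤ (μ + σ) * δ := mul_nonneg (by linarith) hδpos.le
        rw [hX, hc_def] at hle0
        have hexpand : β * S t₀ * I t₀ / N - (μ + σ) * -δ
            + 2 * (ω + σ + γ + β * B / N + 1) * δ
            = (β * (S t₀ * I t₀) + β * (δ * B)) / N + β * B * δ / N + (μ + σ) * δ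
              + (2*ω + 2*σ + 2*γ + 2) * δ := by
          field_simp
          ring
        rw [hexpand] at hle0
        nlinarith [mul_nonneg hσ hδpos.le, mul_nonneg hγ hδpos.le, mul_nonneg hω hδpos.le]
      · -- I attains
        have hd := (hI t₀ ht₀pos.le).add hexp
        have hle0 : (-(μ + γ) * I t₀ + σ * E t₀) + 2 * c * δ ≤ 0 := by
          refine seir_aux_deriv_nonpos ht₀pos hd (fun t ht htlt => ?_) (by simp only [Pi.add_apply]; rw [hX]; linarith)
          have := hbefore t ht htlt
          have := hm_le_I t
          simp only [hg_def, Pi.add_apply] at *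
          linarith
        have h1 : 0 ≤ σ * (E t₀ + δ) := mul_nonneg hσ (by linarith)
        have h2 : 0 ≤ (μ + γ) * δ := mul_nonneg (by linarith) hδpos.le
        have h4 : 0 ≤ β * B / N * δ :=
          mul_nonneg (div_nonneg (mul_nonneg hβ hB0) hN.le) hδpos.le
        rw [hX, hc_def] at hle0
        nlinarith [mul_nonneg hσ hδpos.le, mul_nonneg hγ hδpos.le, mul_nonneg hω hδpos.le]
      · -- R attains
        have hd := (hR t₀ ht₀pos.le).add hexp
        have hle0 : (-(μ + ω) * R t₀ + γ * I t₀ + μ * N * V t₀) + 2 * c * δ ≤ 0 := by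
          refine seir_aux_deriv_nonpos ht₀pos hd (fun t ht htlt => ?_) (by simp only [Pi.add_apply]; rw [hX]; linarith)
          have := hbefore t ht htlt
          have := hm_le_R t
          simp only [hg_def, Pi.add_apply] at *
          linarith
        have h1 : 0 ≤ γ * (I t₀ + δ) := mul_nonneg hγ (by linarith)
        have h2 : 0 ≤ (μ + ω) * δ := mul_nonneg (by linarith) hδpos.le
        have h4 : 0 ≤ β * B / N * δ :=
          mul_nonneg (div_nonneg (mul_nonneg hβ hB0) hN.le) hδpos.le
        have h3 : 0 ≤ μ * N * V t₀ := mul_nonneg (mul_nonneg hμ hN.le) hV₀.1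
        rw [hX, hc_def] at hle0
        nlinarith [mul_nonneg hσ hδpos.le, mul_nonneg hγ hδpos.le, mul_nonneg hω hδpos.le]
    -- pass to the limit ε → 0
    intro t ht
    have hm_nonneg : 0 ≤ m t := by
      by_contra hc
      push_neg at hc
      have hexp_pos : 0 < Real.exp (2 * c * t) := Real.exp_pos _
      have hεpos : 0 < -m t / (2 * Real.exp (2 * c * t)) := by
        apply div_pos (by linarith) (by positivity)
      have := pos_eps _ hεpos t ht
      have hcalc : -m t / (2 * Real.exp (2 * c * t)) * Real.exp (2 * c * t) = -m t / 2 := by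
        field_simp
      rw [hcalc] at this
      linarith
    exact ⟨le_trans hm_nonneg (hm_le_S t), le_trans hm_nonneg (hm_le_E t),
      le_trans hm_nonneg (hm_le_I t), le_trans hm_nonneg (hm_le_R t)⟩
  -- Step 2: the total population is constant equal to N
  have hsumN : ∀ t ≥ (0:ℝ), S t + E t + I t + R t = N := by
    intro t ht
    set f : ℝ → ℝ := fun s => S s + E s + I s + R s - N with hf_def
    have hfd : ∀ x ≥ (0:ℝ), HasDerivAt f (-μ * f x) x := by
      intro x hx
      have := (((hS x hx).add (hE x hx)).add (hI x hx)).add (hR x hx)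
      have h2 := this.sub_const N
      refine h2.congr_deriv ?_
      simp only [hf_def]
      ring
    have hfcont : ContinuousOn f (Icc 0 t) := fun s hs =>
      ((hfd s hs.1).continuousAt).continuousWithinAt
    have hg := norm_le_gronwallBound_of_norm_deriv_right_le (f := f)
      (f' := fun x => -μ * f x) (δ := 0) (K := μ) (ε := 0) (a := 0) (b := t)
      hfcont (fun x hx => (hfd x hx.1).hasDerivWithinAt)
      (by simp [hf_def, hsum]) (fun x hx => by
        rw [Real.norm_eq_abs, Real.norm_eq_abs, abs_mul, abs_neg, abs_of_nonneg hμ]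
        linarith)
    have := hg t ⟨ht, le_refl t⟩
    rw [gronwallBound_ε0_δ0] at this
    have : f t = 0 := by
      have h := abs_nonneg (f t)
      rw [Real.norm_eq_abs] at this
      have := abs_eq_zero.1 (le_antisymm this h)
      exact this
    simp only [hf_def] at this
    linarith
  -- conclude
  intro t ht
  obtain ⟨hSt, hEt, hIt, hRt⟩ := key t t ⟨ht, le_refl t⟩
  have hsum_t := hsumN t ht
  exact ⟨⟨hSt, by linarith⟩, ⟨hEt, by linarith⟩, ⟨hIt, by linarith⟩, ⟨hRt, by linarith⟩⟩
end

section
/- Let N > 0, let μ̂, ω̂, β̂, σ̂, γ̂ ≥ 0, set β̂₁ = β̂/N, and let the feedback gains satisfy k₁ ≥ 0, k₂ = 0, -γ̂ ≤ k₃ ≤ 0, 0 ≤ k₄ ≤ ω̂, k₅ ≥ 0 and 0 ≤ g ≤ μ̂. Suppose Ŝ, Ê, Î, R̂ : [0,∞) → ℝ are differentiable and satisfy for all t ≥ 0 the observer equations Ŝ' = -μ̂Ŝ + ω̂R̂ - β̂ŜÎ/N + μ̂N(1-V), Ê' = β̂ŜÎ/N - (μ̂+σ̂)Ê, Î' = -(μ̂+γ̂)Î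 + σ̂Ê, R̂' = -(μ̂+ω̂)R̂ + γ̂Î + μ̂NV, with the vaccination law V(t) = (1/(μ̂N))(k₁Ŝ(t) + k₂Ê(t) + k₃Î(t) + k₄R̂(t) + k₅Ŝ(t)Î(t) + gN) and μ̂ > 0. If Ŝ(0), Ê(0), Î(0), R̂(0) ≥ 0 and Ŝ(0)+Ê(0)+Î(0)+R̂(0) = N, then for all t ≥ 0 one has 0 ≤ Ŝ(t) ≤ N, 0 ≤ Ê(t) ≤ N, 0 ≤ Î(t) ≤ N and 0 ≤ R̂(t) ≤ N; that is, the SEIR observer under the vaccination feedback law is a positive system. -/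
open Filter Set Real
open scoped Topology

/-- negative-part product bound -/
lemma seir_aux_prod {a b M : ℝ} (hM : 0 ≤ M) (ha : |a| ≤ M) (hb : |b| ≤ M) :
    -(a * b) ≤ M * max (-a) 0 + M * max (-b) 0 := by
  rcases abs_le.1 ha with ⟨ha1, ha2⟩
  rcases abs_le.1 hb with ⟨hb1, hb2⟩
  rcases le_or_gt a 0 with h | h
  · rw [max_eq_left (by linarith : (0:ℝ) ≤ -a)]
    nlinarith [le_max_right (-b) (0:ℝ), le_max_left (-b) (0:ℝ)]
  · rw [max_eq_right (by linarith : -a ≤ (0:ℝ))]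
    rcases le_or_gt b 0 with h' | h'
    · rw [max_eq_left (by linarith : (0:ℝ) ≤ -b)]; nlinarith
    · rw [max_eq_right (by linarith : -b ≤ (0:ℝ))]; nlinarith

/-- one-sided slope bound for the negative part of a differentiable function -/
lemma seir_aux_slope {f : ℝ → ℝ} {t d r ε : ℝ} (hf : HasDerivAt f d t)
    (hr : 0 ≤ r) (hd : f t ≤ 0 → -d ≤ r) (hε : 0 < ε) :
    ∀ᶠ z in 𝓝[>] t, max (-(f z)) 0 - max (-(f t)) 0 ≤ (r + ε) * (z - t) := by
  rcases le_or_gt (f t) 0 with h | h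
  · have hslope := hasDerivAt_iff_tendsto_slope.1 hf
    have h1 : ∀ᶠ z in 𝓝[≠] t, d - ε < slope f t z :=
      hslope (Ioi_mem_nhds (by linarith) : Ioi (d - ε) ∈ 𝓝 d)
    have h2 : ∀ᶠ z in 𝓝[>] t, d - ε < slope f t z :=
      h1.filter_mono (nhdsWithin_mono t fun z hz => ne_of_gt hz)
    filter_upwards [h2, self_mem_nhdsWithin] with z hz (hzt : t < z)
    have hzt' : (0:ℝ) < z - t := by linarith
    have hs : slope f t z = (f z - f t) / (z - t) := slope_def_field f t z
    rw [hs] at hz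
    have key : f t - f z ≤ (r + ε) * (z - t) := by
      have h3 : (d - ε) * (z - t) ≤ f z - f t := by
        have := (lt_div_iff₀ hzt').1 hz
        linarith
      have hdr : -d ≤ r := hd h
      nlinarith
    rw [max_eq_left (by linarith : (0:ℝ) ≤ -(f t))]
    have h4 : max (-(f z)) 0 ≤ (r + ε) * (z - t) + -(f t) := by
      apply max_le
      · linarith
      · nlinarith
    linarith
  · have : ∀ᶠ z in 𝓝 t, 0 < f z := (hf.continuousAt).eventually (eventually_gt_nhds h)
    filter_upwards [this.filter_mono nhdsWithin_le_nhds, self_mem_nhdsWithin] with z hz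
      (hzt : t < z)
    rw [max_eq_right (by linarith : -(f z) ≤ 0), max_eq_right (by linarith : -(f t) ≤ 0)]
    nlinarith

set_option maxHeartbeats 1600000 in
/-- Under the stated sign conditions on the nonnegative estimated
parameters and on the feedback gains `k₁ ≥ 0`, `k₂ = 0`, `-γ̂ ≤ k₃ ≤ 0`, `0 ≤ k₄ ≤ ω̂`,
`k₅ ≥ 0`, `0 ≤ g ≤ μ̂`, the SEIR observer under the vaccination feedback law
`V = (1/(μ̂N))(k₁Ŝ + k₂Ê + k₃Î + k₄R̂ + k₅ŜÎ + gN)` is a positive system: nonnegative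
initial estimates summing to `N` stay in `[0, N]` for all `t ≥ 0`. -/
theorem seir_observer_feedback_positive_and_bounded
    (N μh ωh βh σh γh β₁h k₁ k₂ k₃ k₄ k₅ g : ℝ) (hN : 0 < N)
    (hμh : 0 < μh) (hωh : 0 ≤ ωh) (hβh : 0 ≤ βh) (hσh : 0 ≤ σh) (hγh : 0 ≤ γh)
    (hβ₁h : β₁h = βh / N)
    (hk₁ : 0 ≤ k₁) (hk₂ : k₂ = 0) (hk₃l : -γh ≤ k₃) (hk₃u : k₃ ≤ 0)
    (hk₄l : 0 ≤ k₄) (hk₄u : k₄ ≤ ωh) (hk₅ : 0 ≤ k₅)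
    (hgl : 0 ≤ g) (hgu : g ≤ μh)
    (Sh Eh Ih Rh V : ℝ → ℝ)
    (hV : ∀ t : ℝ, V t = (1 / (μh * N)) *
      (k₁ * Sh t + k₂ * Eh t + k₃ * Ih t + k₄ * Rh t + k₅ * Sh t * Ih t + g * N))
    (hS : ∀ t ≥ (0 : ℝ), HasDerivAt Sh
      (-μh * Sh t + ωh * Rh t - βh * Sh t * Ih t / N + μh * N * (1 - V t)) t)
    (hE : ∀ t ≥ (0 : ℝ), HasDerivAt Eh
      (βh * Sh t * Ih t / N - (μh + σh) * Eh t) t)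
    (hI : ∀ t ≥ (0 : ℝ), HasDerivAt Ih
      (-(μh + γh) * Ih t + σh * Eh t) t)
    (hR : ∀ t ≥ (0 : ℝ), HasDerivAt Rh
      (-(μh + ωh) * Rh t + γh * Ih t + μh * N * V t) t)
    (hS0 : 0 ≤ Sh 0) (hE0 : 0 ≤ Eh 0) (hI0 : 0 ≤ Ih 0) (hR0 : 0 ≤ Rh 0)
    (hsum : Sh 0 + Eh 0 + Ih 0 + Rh 0 = N) :
    ∀ t ≥ (0 : ℝ),
      (0 ≤ Sh t ∧ Sh t ≤ N) ∧ (0 ≤ Eh t ∧ Eh t ≤ N) ∧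
      (0 ≤ Ih t ∧ Ih t ≤ N) ∧ (0 ≤ Rh t ∧ Rh t ≤ N) := by
  have hβ₁nn : 0 ≤ β₁h := hβ₁h ▸ div_nonneg hβh hN.le
  have hNne : N ≠ 0 := hN.ne'
  have hμne : μh ≠ 0 := hμh.ne'
  -- rewritten derivatives
  have hS' : ∀ t ≥ (0:ℝ), HasDerivAt Sh
      (-(μh + k₁) * Sh t + (ωh - k₄) * Rh t + (-k₃) * Ih t
        - (β₁h + k₅) * (Sh t * Ih t) + (μh - g) * N) t := by
    intro t ht
    convert hS t ht using 1
    rw [hV t, hk₂, hβ₁h]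
    field_simp
    ring
  have hE' : ∀ t ≥ (0:ℝ), HasDerivAt Eh
      (β₁h * (Sh t * Ih t) - (μh + σh) * Eh t) t := by
    intro t ht
    convert hE t ht using 1
    rw [hβ₁h]
    field_simp
  have hR' : ∀ t ≥ (0:ℝ), HasDerivAt Rh
      (-(μh + ωh - k₄) * Rh t + (γh + k₃) * Ih t + k₁ * Sh t
        + k₅ * (Sh t * Ih t) + g * N) t := by
    intro t ht
    convert hR t ht using 1
    rw [hV t, hk₂]
    field_simp
    ring
  -- Step 1: nonnegativity on every [0, T]
  have key : ∀ T ≥ (0:ℝ), ∀ x ∈ Icc (0:ℝ) T,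
      0 ≤ Sh x ∧ 0 ≤ Eh x ∧ 0 ≤ Ih x ∧ 0 ≤ Rh x := by
    intro T hT
    have hcS : ContinuousOn Sh (Icc 0 T) :=
      fun t ht => ((hS t ht.1).continuousAt).continuousWithinAt
    have hcE : ContinuousOn Eh (Icc 0 T) :=
      fun t ht => ((hE t ht.1).continuousAt).continuousWithinAt
    have hcI : ContinuousOn Ih (Icc 0 T) :=
      fun t ht => ((hI t ht.1).continuousAt).continuousWithinAt
    have hcR : ContinuousOn Rh (Icc 0 T) :=
      fun t ht => ((hR t ht.1).continuousAt).continuousWithinAt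
    obtain ⟨MS, hMS⟩ := (isCompact_Icc).exists_bound_of_continuousOn hcS
    obtain ⟨MI, hMI⟩ := (isCompact_Icc).exists_bound_of_continuousOn hcI
    obtain ⟨M, hM0, hMS', hMI'⟩ : ∃ M : ℝ, 0 ≤ M ∧ (∀ x ∈ Icc (0:ℝ) T, |Sh x| ≤ M) ∧
        (∀ x ∈ Icc (0:ℝ) T, |Ih x| ≤ M) := by
      refine ⟨max (max MS MI) 0, le_max_right _ _, fun x hx => ?_, fun x hx => ?_⟩
      · exact le_trans (by simpa using hMS x hx)
          (le_trans (le_max_left MS MI) (le_max_left _ _))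
      · exact le_trans (by simpa using hMI x hx)
          (le_trans (le_max_right MS MI) (le_max_left _ _))
    obtain ⟨C, hC0, hAS, hAE, hAI, hAR⟩ : ∃ C : ℝ, 0 ≤ C ∧
        ωh + γh + (β₁h + k₅) * M ≤ C ∧ β₁h * M ≤ C ∧ σh ≤ C ∧
        γh + k₁ + k₅ * M ≤ C := by
      refine ⟨ωh + γh + σh + k₁ + (2*β₁h + 2*k₅) * M, ?_, ?_, ?_, ?_, ?_⟩ <;>
        nlinarith [mul_nonneg hβ₁nn hM0, mul_nonneg hk₅ hM0]
    obtain ⟨f, hfeq⟩ : ∃ f : ℝ → ℝ, ∀ t, f t =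
        max (-(Sh t)) 0 + max (-(Eh t)) 0 + max (-(Ih t)) 0 + max (-(Rh t)) 0 :=
      ⟨_, fun t => rfl⟩
    have hf0 : ∀ x, 0 ≤ f x := by
      intro x
      have h1 := le_max_right (-(Sh x)) (0:ℝ)
      have h2 := le_max_right (-(Eh x)) (0:ℝ)
      have h3 := le_max_right (-(Ih x)) (0:ℝ)
      have h4 := le_max_right (-(Rh x)) (0:ℝ)
      rw [hfeq x]; linarith
    have hfc : ContinuousOn f (Icc 0 T) := by
      rw [funext hfeq]
      exact (((hcS.neg.sup continuousOn_const).add (hcE.neg.sup continuousOn_const)).add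
        (hcI.neg.sup continuousOn_const)).add (hcR.neg.sup continuousOn_const)
    have grw : ∀ x ∈ Icc (0:ℝ) T, f x ≤ gronwallBound 0 (4*C) 0 (x - 0) := by
      apply le_gronwallBound_of_liminf_deriv_right_le hfc
        (f' := fun x => (4*C) * f x)
      · -- liminf condition
        intro x hx r hr
        have hr' : (4*C) * f x < r := hr
        have hxIcc : x ∈ Icc (0:ℝ) T := ⟨hx.1, hx.2.le⟩
        obtain ⟨ε, hεpos, hεdef⟩ : ∃ ε : ℝ, 0 < ε ∧ 8 * ε = r - 4 * C * f x :=
          ⟨(r - 4 * C * f x)/8, by linarith, by ring⟩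
        have hrC : 0 ≤ C * f x := mul_nonneg hC0 (hf0 x)
        obtain ⟨B, hB0, hBdef⟩ : ∃ B : ℝ, 0 ≤ B ∧ C * f x = B := ⟨_, hrC, rfl⟩
        have hSb := abs_le.1 (hMS' x hxIcc)
        have hIb := abs_le.1 (hMI' x hxIcc)
        have nS0 : 0 ≤ max (-(Sh x)) 0 := le_max_right _ _
        have nE0 : 0 ≤ max (-(Eh x)) 0 := le_max_right _ _
        have nI0 : 0 ≤ max (-(Ih x)) 0 := le_max_right _ _
        have nR0 : 0 ≤ max (-(Rh x)) 0 := le_max_right _ _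
        have nS1 : -(Sh x) ≤ max (-(Sh x)) 0 := le_max_left _ _
        have nE1 : -(Eh x) ≤ max (-(Eh x)) 0 := le_max_left _ _
        have nI1 : -(Ih x) ≤ max (-(Ih x)) 0 := le_max_left _ _
        have nR1 : -(Rh x) ≤ max (-(Rh x)) 0 := le_max_left _ _
        have hfx : f x = max (-(Sh x)) 0 + max (-(Eh x)) 0 + max (-(Ih x)) 0
            + max (-(Rh x)) 0 := hfeq x
        have hprod := seir_aux_prod hM0 (hMS' x hxIcc) (hMI' x hxIcc)
        -- quasipositivity bound for S
        have hqS : Sh x ≤ 0 →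
            -(-(μh + k₁) * Sh x + (ωh - k₄) * Rh x + (-k₃) * Ih x
              - (β₁h + k₅) * (Sh x * Ih x) + (μh - g) * N) ≤ C * f x := by
          intro hs
          have hnS : max (-(Sh x)) 0 = -(Sh x) := max_eq_left (by linarith)
          have hsi : Sh x * Ih x ≤ -(Sh x) * M := by
            nlinarith [mul_nonneg (neg_nonneg.2 hs) (by linarith : (0:ℝ) ≤ M + Ih x)]
          have hA : ωh + γh + (β₁h + k₅) * M ≤ C := hAS
          have step : -(-(μh + k₁) * Sh x + (ωh - k₄) * Rh x + (-k₃) * Ih x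
              - (β₁h + k₅) * (Sh x * Ih x) + (μh - g) * N)
              ≤ (ωh + γh + (β₁h + k₅) * M) * f x := by
            rw [hfx, hnS]
            linarith only [mul_nonneg hμh.le (neg_nonneg.2 hs),
              mul_nonneg hk₁ (neg_nonneg.2 hs),
              mul_le_mul_of_nonneg_left nR1 (by linarith : (0:ℝ) ≤ ωh - k₄),
              mul_nonneg hk₄l nR0,
              mul_le_mul_of_nonneg_left nI1 (by linarith : (0:ℝ) ≤ -k₃),
              mul_nonneg (by linarith : (0:ℝ) ≤ γh + k₃) nI0,
              mul_le_mul_of_nonneg_left hsi (add_nonneg hβ₁nn hk₅),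
              mul_nonneg (by linarith : (0:ℝ) ≤ μh - g) hN.le,
              mul_nonneg hωh nE0, mul_nonneg hγh nE0,
              mul_nonneg (mul_nonneg (add_nonneg hβ₁nn hk₅) hM0) nE0,
              mul_nonneg hωh nI0,
              mul_nonneg (mul_nonneg (add_nonneg hβ₁nn hk₅) hM0) nI0,
              mul_nonneg hγh nR0,
              mul_nonneg (mul_nonneg (add_nonneg hβ₁nn hk₅) hM0) nR0,
              mul_nonneg hωh (neg_nonneg.2 hs), mul_nonneg hγh (neg_nonneg.2 hs),
              mul_nonneg (mul_nonneg (add_nonneg hβ₁nn hk₅) hM0) nI0]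
          exact step.trans (mul_le_mul_of_nonneg_right hA (hf0 x))
        -- quasipositivity bound for E
        have hqE : Eh x ≤ 0 →
            -(β₁h * (Sh x * Ih x) - (μh + σh) * Eh x) ≤ C * f x := by
          intro he
          have step : -(β₁h * (Sh x * Ih x) - (μh + σh) * Eh x)
              ≤ (β₁h * M) * f x := by
            rw [hfx]
            have h1 : β₁h * (-(Sh x * Ih x)) ≤ β₁h * (M * max (-(Sh x)) 0
                + M * max (-(Ih x)) 0) := mul_le_mul_of_nonneg_left hprod hβ₁nn
            linarith only [h1, mul_nonneg (add_nonneg hμh.le hσh) (neg_nonneg.2 he),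
              mul_nonneg (mul_nonneg hβ₁nn hM0) nE0,
              mul_nonneg (mul_nonneg hβ₁nn hM0) nR0]
          exact step.trans (mul_le_mul_of_nonneg_right hAE (hf0 x))
        -- quasipositivity bound for I
        have hqI : Ih x ≤ 0 →
            -(-(μh + γh) * Ih x + σh * Eh x) ≤ C * f x := by
          intro hi
          have step : -(-(μh + γh) * Ih x + σh * Eh x) ≤ σh * f x := by
            rw [hfx]
            linarith only [mul_nonneg (add_nonneg hμh.le hγh) (neg_nonneg.2 hi),
              mul_le_mul_of_nonneg_left nE1 hσh,
              mul_nonneg hσh nS0, mul_nonneg hσh nI0, mul_nonneg hσh nR0]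
          exact step.trans (mul_le_mul_of_nonneg_right hAI (hf0 x))
        -- quasipositivity bound for R
        have hqR : Rh x ≤ 0 →
            -(-(μh + ωh - k₄) * Rh x + (γh + k₃) * Ih x + k₁ * Sh x
              + k₅ * (Sh x * Ih x) + g * N) ≤ C * f x := by
          intro hrh
          have step : -(-(μh + ωh - k₄) * Rh x + (γh + k₃) * Ih x + k₁ * Sh x
              + k₅ * (Sh x * Ih x) + g * N) ≤ (γh + k₁ + k₅ * M) * f x := by
            rw [hfx]
            have h1 : k₅ * (-(Sh x * Ih x)) ≤ k₅ * (M * max (-(Sh x)) 0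
                + M * max (-(Ih x)) 0) := mul_le_mul_of_nonneg_left hprod hk₅
            linarith only [h1, mul_nonneg (by linarith : (0:ℝ) ≤ μh + ωh - k₄) (neg_nonneg.2 hrh),
              mul_le_mul_of_nonneg_left nI1 (by linarith : (0:ℝ) ≤ γh + k₃),
              mul_nonneg (by linarith : (0:ℝ) ≤ -k₃) nI0,
              mul_le_mul_of_nonneg_left nS1 hk₁,
              mul_nonneg hgl hN.le,
              mul_nonneg hγh nS0, mul_nonneg hγh nE0, mul_nonneg hγh nR0,
              mul_nonneg hk₁ nE0, mul_nonneg hk₁ nI0, mul_nonneg hk₁ nR0,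
              mul_nonneg (mul_nonneg hk₅ hM0) nE0,
              mul_nonneg (mul_nonneg hk₅ hM0) nR0]
          exact step.trans (mul_le_mul_of_nonneg_right hAR (hf0 x))
        have hBS := seir_aux_slope (hS' x hx.1) hB0 (fun h => (hqS h).trans (le_of_eq hBdef)) hεpos
        have hBE := seir_aux_slope (hE' x hx.1) hB0 (fun h => (hqE h).trans (le_of_eq hBdef)) hεpos
        have hBI := seir_aux_slope (hI x hx.1) hB0 (fun h => (hqI h).trans (le_of_eq hBdef)) hεpos
        have hBR := seir_aux_slope (hR' x hx.1) hB0 (fun h => (hqR h).trans (le_of_eq hBdef)) hεpos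
        apply Filter.Eventually.frequently
        filter_upwards [hBS, hBE, hBI, hBR, self_mem_nhdsWithin] with z h1 h2 h3 h4
          (hz : x < z)
        have hzx : (0:ℝ) < z - x := by linarith
        have hsum4 : f z - f x ≤ (4 * B + 4 * ε) * (z - x) := by
          rw [hfeq z, hfeq x]; linarith only [h1, h2, h3, h4]
        rw [inv_mul_eq_div, div_lt_iff₀ hzx]
        have hlt : 4 * B + 4 * ε < r := by linarith only [hεdef, hBdef, hr', hεpos]
        linarith only [hsum4, mul_lt_mul_of_pos_right hlt hzx]
      · -- f 0 ≤ 0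
        have e1 : max (-(Sh 0)) 0 = 0 := max_eq_right (by linarith)
        have e2 : max (-(Eh 0)) 0 = 0 := max_eq_right (by linarith)
        have e3 : max (-(Ih 0)) 0 = 0 := max_eq_right (by linarith)
        have e4 : max (-(Rh 0)) 0 = 0 := max_eq_right (by linarith)
        rw [hfeq 0, e1, e2, e3, e4]; norm_num
      · intro x _
        simp
    intro x hx
    have hfx0 : f x = 0 := by
      have h1 := grw x hx
      rw [gronwallBound_ε0_δ0] at h1
      exact le_antisymm h1 (hf0 x)
    have nS0 : 0 ≤ max (-(Sh x)) 0 := le_max_right _ _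
    have nE0 : 0 ≤ max (-(Eh x)) 0 := le_max_right _ _
    have nI0 : 0 ≤ max (-(Ih x)) 0 := le_max_right _ _
    have nR0 : 0 ≤ max (-(Rh x)) 0 := le_max_right _ _
    have nS1 : -(Sh x) ≤ max (-(Sh x)) 0 := le_max_left _ _
    have nE1 : -(Eh x) ≤ max (-(Eh x)) 0 := le_max_left _ _
    have nI1 : -(Ih x) ≤ max (-(Ih x)) 0 := le_max_left _ _
    have nR1 : -(Rh x) ≤ max (-(Rh x)) 0 := le_max_left _ _
    rw [hfeq x] at hfx0
    refine ⟨by linarith, by linarith, by linarith, by linarith⟩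
  -- Step 2: the total population is constant
  have hP : ∀ t ≥ (0:ℝ), Sh t + Eh t + Ih t + Rh t = N := by
    intro t ht
    rcases eq_or_lt_of_le ht with h0 | h0
    · rw [← h0]; exact hsum
    have hh : ∀ u ≥ (0:ℝ),
        HasDerivAt (fun v => (Sh v + Eh v + Ih v + Rh v - N) * Real.exp (μh * v)) 0 u := by
      intro u hu
      have hPu : HasDerivAt (fun v => Sh v + Eh v + Ih v + Rh v - N)
          (μh * (N - (Sh u + Eh u + Ih u + Rh u))) u := by
        have hd := (((hS u hu).add (hE u hu)).add (hI u hu)).add (hR u hu)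
        have := hd.sub_const N
        refine this.congr_deriv ?_
        ring
      have h2 : HasDerivAt (fun v => Real.exp (μh * v)) (μh * Real.exp (μh * u)) u := by
        have := (Real.hasDerivAt_exp (μh * u)).comp u ((hasDerivAt_id u).const_mul μh)
        refine this.congr_deriv ?_
        · ring
      have := hPu.mul h2
      refine this.congr_deriv ?_
      ring
    have hconst := constant_of_derivWithin_zero
      (f := fun v => (Sh v + Eh v + Ih v + Rh v - N) * Real.exp (μh * v)) (a := 0) (b := t)
      (fun x hx => ((hh x hx.1).differentiableAt).differentiableWithinAt)
      (fun x hx => by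
        have := ((hh x hx.1).hasDerivWithinAt (s := Icc 0 t)).derivWithin
          ((uniqueDiffOn_Icc h0) x (Ico_subset_Icc_self hx))
        exact this)
    have ht' : (Sh t + Eh t + Ih t + Rh t - N) * Real.exp (μh * t)
        = (Sh 0 + Eh 0 + Ih 0 + Rh 0 - N) * Real.exp (μh * 0) :=
      hconst t (right_mem_Icc.2 ht)
    have h00 : Sh 0 + Eh 0 + Ih 0 + Rh 0 - N = 0 := by linarith
    rw [h00, zero_mul] at ht'
    have hexp : Real.exp (μh * t) ≠ 0 := (Real.exp_pos _).ne'
    have := mul_eq_zero.1 ht'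
    rcases this with h | h
    · linarith
    · exact absurd h hexp
  -- conclusion
  intro t ht
  obtain ⟨h1, h2, h3, h4⟩ := key t ht t (right_mem_Icc.2 ht)
  have h5 := hP t ht
  exact ⟨⟨h1, by linarith⟩, ⟨h2, by linarith⟩, ⟨h3, by linarith⟩, ⟨h4, by linarith⟩⟩
end

section
/- Let N > 0, μ̂ > 0, and let k₁ ≥ 0, k₄ ≥ 0, k₅ ≥ 0, -γ̂ ≤ k₃ ≤ 0 with γ̂ ≥ 0, and g ≥ -k₃. Suppose Ŝ, Î, R̂ : [0,∞) → ℝ satisfy 0 ≤ Ŝ(t) ≤ N, 0 ≤ Î(t) ≤ N and 0 ≤ R̂(t) ≤ N for all t ≥ 0. Then the vaccination control V(t) = (1/(μ̂N))(k₁Ŝ(t) + k₃Î(t) + k₄R̂(t) + k₅Ŝ(t)Î(t) + gN) satisfies V(t) ≥ 0 for all t ≥ 0. -/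
/-- Assertion 7, nonnegativity of the vaccination control: under the
stated sign conditions on the gains and with the observer estimates in `[0, N]`, the
vaccination control `V(t) = (1/(μ̂N))(k₁Ŝ + k₃Î + k₄R̂ + k₅ŜÎ + gN)` is nonnegative
for all `t ≥ 0`. -/
theorem vaccination_control_nonneg
    (N μh γh k₁ k₃ k₄ k₅ g : ℝ) (hN : 0 < N) (hμh : 0 < μh)
    (hγh : 0 ≤ γh) (hk₁ : 0 ≤ k₁) (hk₄ : 0 ≤ k₄) (hk₅ : 0 ≤ k₅)
    (hk₃l : -γh ≤ k₃) (hk₃u : k₃ ≤ 0) (hg : -k₃ ≤ g)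
    (Sh Ih Rh : ℝ → ℝ)
    (hSh : ∀ t ≥ (0 : ℝ), 0 ≤ Sh t ∧ Sh t ≤ N)
    (hIh : ∀ t ≥ (0 : ℝ), 0 ≤ Ih t ∧ Ih t ≤ N)
    (hRh : ∀ t ≥ (0 : ℝ), 0 ≤ Rh t ∧ Rh t ≤ N)
    (V : ℝ → ℝ)
    (hV : ∀ t : ℝ, V t = (1 / (μh * N)) *
      (k₁ * Sh t + k₃ * Ih t + k₄ * Rh t + k₅ * Sh t * Ih t + g * N)) :
    ∀ t ≥ (0 : ℝ), 0 ≤ V t := by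
  intro t ht
  obtain ⟨hS0, hSN⟩ := hSh t ht
  obtain ⟨hI0, hIN⟩ := hIh t ht
  obtain ⟨hR0, _⟩ := hRh t ht
  rw [hV t]
  apply mul_nonneg
  · positivity
  · have h1 : 0 ≤ k₁ * Sh t := mul_nonneg hk₁ hS0
    have h2 : 0 ≤ k₄ * Rh t := mul_nonneg hk₄ hR0
    have h3 : 0 ≤ k₅ * Sh t * Ih t := mul_nonneg (mul_nonneg hk₅ hS0) hI0
    have h4 : k₃ * N ≤ k₃ * Ih t := mul_le_mul_of_nonpos_left hIN hk₃u
    nlinarith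
end
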